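/- arXiv:1602.04089 — 7 statements merged into one kernel-verified Lean document; each statement's English description precedes it below -/
import Mathlib

section
/- Let G be a nontrivial connected graph of order n and let C be an identifying code of G □ K₂ with m₁ codewords in the first G-fiber and m₂ codewords in the second G-fiber. Then n ≤ min{2^{m₁} − 1 + m₂, 2^{m₂} − 1 + m₁}. -/
open SimpleGraph

variable {V W : Type} 

/-- Closed neighborhood of a vertex. -/
def cN (G : SimpleGraph V) (v : V) : Set V := insert v (G.neighborSet v)

/-- `C` is a dominating set of `G`. -/
def IsDomSet (G : SimpleGraph V) (C : Set V) : Prop :=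
  ∀ v : V, (cN G v ∩ C).Nonempty

/-- `C` is an identifying code of `G`. -/
def IsIDCode (G : SimpleGraph V) (C : Set V) : Prop :=
  IsDomSet G C ∧ ∀ u v : V, u ≠ v → cN G u ∩ C ≠ cN G v ∩ C

/-- The identifying code number `γ^{ID}(G)`. -/
noncomputable def idNum (G : SimpleGraph V) : ℕ :=
  sInf {k | ∃ C : Set V, IsIDCode G C ∧ C.ncard = k}

/-- The domination number `γ(G)`. -/
noncomputable def domNum (G : SimpleGraph V) : ℕ :=
  sInf {k | ∃ C : Set V, IsDomSet G C ∧ C.ncard = k}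

/-- A graph is twin-free if distinct vertices have distinct closed neighborhoods. -/
def TwinFree (G : SimpleGraph V) : Prop :=
  ∀ u v : V, cN G u = cN G v → u = v

/-- A 2-packing: vertices pairwise at distance at least 3. -/
def IsTwoPacking (G : SimpleGraph V) (S : Set V) : Prop :=
  ∀ u ∈ S, ∀ v ∈ S, u ≠ v → 3 ≤ G.dist u v

/-- The 2-packing number `ρ₂(G)`. -/
noncomputable def pack2 (G : SimpleGraph V) : ℕ :=
  sSup {k | ∃ S : Set V, IsTwoPacking G S ∧ S.ncard = k}

/-- The prism of `G`: Cartesian product with `K₂`. -/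
abbrev prism (G : SimpleGraph V) : SimpleGraph (V × Fin 2) :=
  G □ (⊤ : SimpleGraph (Fin 2))

/-- The graph `A_k` on `2k` vertices `x₁,…,x_{2k}`, with `xᵢ ~ xⱼ` iff `|i-j| ≤ k-1`. -/
def graphA (k : ℕ) : SimpleGraph (Fin (2 * k)) :=
  SimpleGraph.fromRel (fun i j => |(i : ℤ) - (j : ℤ)| ≤ (k : ℤ) - 1)

/-- The join `G ⋈ H` of two graphs. -/
def joinG (G : SimpleGraph V) (H : SimpleGraph W) : SimpleGraph (V ⊕ W) :=
  SimpleGraph.fromRel (fun a b =>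
    match a, b with
    | Sum.inl u, Sum.inl v => G.Adj u v
    | Sum.inr u, Sum.inr v => H.Adj u v
    | _, _ => True)

/-- The corona `H ∘ K₁`: add a pendant vertex to each vertex. -/
def corona (H : SimpleGraph V) : SimpleGraph (V ⊕ V) :=
  SimpleGraph.fromRel (fun a b =>
    match a, b with
    | Sum.inl u, Sum.inl v => H.Adj u v
    | Sum.inl u, Sum.inr v => u = v
    | _, _ => False)

/-- The class `𝒜`: closure of `{A_k : k ≥ 1}` under join, up to isomorphism. -/
inductive ClassA : {V : Type} → SimpleGraph V → Prop
  | base (k : ℕ) (hk : 1 ≤ k) : ClassA (graphA k)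
  | join {V W : Type} (G : SimpleGraph V) (H : SimpleGraph W) :
      ClassA G → ClassA H → ClassA (joinG G H)
  | iso {V W : Type} (G : SimpleGraph V) (H : SimpleGraph W) :
      ClassA G → (G ≃g H) → ClassA H

/-- Membership in `𝒜 ⋈ K₁`. -/
def ClassAJoinK1 (G : SimpleGraph V) : Prop :=
  ∃ (W : Type) (H : SimpleGraph W), ClassA H ∧
    Nonempty (G ≃g joinG H (⊤ : SimpleGraph Unit))

/- In the prism, a vertex `(v, i)` whose twin `(v, j)` is not a codeword is identified by codewords
of its own fiber alone; there are at most `2 ^ mᵢ - 1` such vertices, and the remaining ones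
correspond to the `mⱼ` codewords of the other fiber. -/

theorem cN_boxProd_subset (G : SimpleGraph V) (H : SimpleGraph W) (x : V × W) :
    cN (G □ H) x ⊆ {p | p.2 = x.2} ∪ {p | p.1 = x.1} := by
  rintro p (rfl | ⟨-, h⟩ | ⟨-, h⟩)
  exacts [Or.inl rfl, Or.inl h.symm, Or.inr h.symm]

theorem cN_prism_inter_subset_fiber (G : SimpleGraph V) {C : Set (V × Fin 2)} {i j : Fin 2}
    (hij : i ≠ j) {v : V} (hv : (v, j) ∉ C) :
    cN (prism G) (v, i) ∩ C ⊆ C ∩ {p | p.2 = i} := by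
  rintro p ⟨hpN, hpC⟩
  refine ⟨hpC, ?_⟩
  rcases cN_boxProd_subset G ⊤ (v, i) hpN with hi | hv'
  · exact hi
  · by_contra hne
    have hj : p.2 = j := (by decide : ∀ a b c : Fin 2, a ≠ b → b ≠ c → a = c) _ _ _ hne hij
    have hp : p = (v, j) := Prod.ext hv' hj
    exact hv (hp ▸ hpC)

namespace IsIDCode

/-- Distinct vertices have distinct, nonempty traces `N[v] ∩ C`. -/
theorem ncard_le_two_pow_sub_one {H : SimpleGraph V} {C : Set V} (hC : IsIDCode H C)
    {S D : Set V} (hD : D.Finite) (hS : ∀ v ∈ S, cN H v ∩ C ⊆ D) :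
    S.ncard ≤ 2 ^ D.ncard - 1 := by
  have hmaps : ∀ v ∈ S, cN H v ∩ C ∈ 𝒫 D \ {∅} := fun v hv =>
    ⟨hS v hv, (hC.1 v).ne_empty⟩
  have hinj : Set.InjOn (fun v => cN H v ∩ C) S := fun u _ v _ huv =>
    by_contra fun hne => hC.2 u v hne huv
  calc S.ncard ≤ (𝒫 D \ {∅}).ncard :=
        Set.ncard_le_ncard_of_injOn _ hmaps hinj hD.powerset.sdiff
    _ = 2 ^ D.ncard - 1 := by
        rw [Set.ncard_sdiff_singleton_of_mem (Set.empty_subset D),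
          Set.ncard_powerset D hD]

theorem card_le_prism [Fintype V] {G : SimpleGraph V} {C : Set (V × Fin 2)}
    (hC : IsIDCode (prism G) C) {i j : Fin 2} (hij : i ≠ j) :
    Fintype.card V ≤ 2 ^ (C ∩ {p | p.2 = i}).ncard - 1 + (C ∩ {p | p.2 = j}).ncard := by
  set A : Set V := {v | (v, j) ∈ C}
  have hA : A.ncard = (C ∩ {p | p.2 = j}).ncard := by
    rw [← Set.ncard_image_of_injective A (Prod.mk_left_injective j)]
    congr 1
    ext ⟨v, k⟩
    constructor
    · rintro ⟨w, hw, ⟨⟩⟩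
      exact ⟨hw, rfl⟩
    · rintro ⟨hvk, rfl : k = j⟩
      exact ⟨v, hvk, rfl⟩
  have hAc : Aᶜ.ncard ≤ 2 ^ (C ∩ {p | p.2 = i}).ncard - 1 := by
    rw [← Set.ncard_image_of_injective Aᶜ (Prod.mk_left_injective i)]
    refine hC.ncard_le_two_pow_sub_one (Set.toFinite _) ?_
    rintro _ ⟨v, hv, rfl⟩
    exact cN_prism_inter_subset_fiber G hij hv
  have hsplit := Set.ncard_add_ncard_compl A
  rw [Nat.card_eq_fintype_card] at hsplit
  omega

end IsIDCode

theorem stmt4_general {V : Type} [Fintype V] (G : SimpleGraph V)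
    (C : Set (V × Fin 2)) (hC : IsIDCode (prism G) C)
    (m1 m2 : ℕ) (hm1 : (C ∩ {p | p.2 = 0}).ncard = m1)
    (hm2 : (C ∩ {p | p.2 = 1}).ncard = m2) :
    Fintype.card V ≤ min (2 ^ m1 - 1 + m2) (2 ^ m2 - 1 + m1) := by
  subst hm1 hm2
  exact le_min (hC.card_le_prism (by decide)) (hC.card_le_prism (by decide))

/-- if C is an ID code of the prism of a nontrivial connected graph of
order n with mᵢ codewords in fiber i, then n ≤ min(2^{m₁}-1+m₂, 2^{m₂}-1+m₁). -/
theorem stmt4 {V : Type} [Fintype V] (G : SimpleGraph V) (hconn : G.Connected)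
    (hnt : 1 < Fintype.card V) (C : Set (V × Fin 2)) (hC : IsIDCode (prism G) C)
    (m1 m2 : ℕ) (hm1 : (C ∩ {p | p.2 = 0}).ncard = m1)
    (hm2 : (C ∩ {p | p.2 = 1}).ncard = m2) :
    Fintype.card V ≤ min (2 ^ m1 - 1 + m2) (2 ^ m2 - 1 + m1) :=
  stmt4_general G C hC m1 m2 hm1 hm2
end

section
/- If a graph G has a minimum identifying code I such that the subgraph of G induced by I has no isolated vertices, then γ^{ID}(G □ K₂) ≤ 2·γ^{ID}(G). In fact, I × {1,2} is an identifying code of G □ K₂. -/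
open SimpleGraph

variable {V W : Type} 

lemma mem_cN_prism {V : Type} (G : SimpleGraph V) (v w : V) (i l : Fin 2) :
    (w, l) ∈ cN (prism G) (v, i) ↔ (l = i ∧ w ∈ cN G v) ∨ (l ≠ i ∧ w = v) := by
  simp only [cN, Set.mem_insert_iff, SimpleGraph.mem_neighborSet, Prod.mk.injEq,
    SimpleGraph.boxProd_adj, SimpleGraph.top_adj]
  constructor
  · rintro (⟨h1, h2⟩ | ⟨hadj, rfl⟩ | ⟨hne, rfl⟩)
    · exact Or.inl ⟨h2, Or.inl h1⟩
    · exact Or.inl ⟨rfl, Or.inr hadj⟩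
    · exact Or.inr ⟨(Ne.symm hne), rfl⟩
  · rintro (⟨rfl, (rfl | hadj)⟩ | ⟨hne, rfl⟩)
    · exact Or.inl ⟨rfl, rfl⟩
    · exact Or.inr (Or.inl ⟨hadj, rfl⟩)
    · exact Or.inr (Or.inr ⟨Ne.symm hne, rfl⟩)

lemma prism_code {V : Type} (G : SimpleGraph V) (I : Set V)
    (hI : IsIDCode G I)
    (hnoiso : ∀ u ∈ I, ∃ v ∈ I, G.Adj u v) :
    IsIDCode (prism G) (I ×ˢ (Set.univ : Set (Fin 2))) := by
  set C : Set (V × Fin 2) := I ×ˢ (Set.univ : Set (Fin 2)) with hC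
  have hmemC : ∀ w : V, ∀ l : Fin 2, (w, l) ∈ C ↔ w ∈ I := by
    intro w l; simp [hC]
  constructor
  · rintro ⟨v, i⟩
    obtain ⟨w, hw1, hw2⟩ := hI.1 v
    exact ⟨(w, i), (mem_cN_prism G v w i i).2 (Or.inl ⟨rfl, hw1⟩), (hmemC w i).2 hw2⟩
  · rintro ⟨u, i⟩ ⟨v, j⟩ hne heq
    have key : ∀ w : V, ∀ l : Fin 2,
        (((l = i ∧ w ∈ cN G u) ∨ (l ≠ i ∧ w = u)) ∧ w ∈ I) ↔
        (((l = j ∧ w ∈ cN G v) ∨ (l ≠ j ∧ w = v)) ∧ w ∈ I) := by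
      intro w l
      have := Set.ext_iff.1 heq (w, l)
      simp only [Set.mem_inter_iff, mem_cN_prism, hmemC] at this
      exact this
    by_cases hij : i = j
    · subst hij
      have huv : u ≠ v := by
        intro h; exact hne (by rw [h])
      apply hI.2 u v huv
      ext w
      simp only [Set.mem_inter_iff]
      have := key w i
      constructor
      · rintro ⟨h1, h2⟩
        rcases (this.1 ⟨Or.inl ⟨rfl, h1⟩, h2⟩).1 with ⟨_, h⟩ | ⟨h, _⟩
        · exact ⟨h, h2⟩
        · exact absurd rfl h
      · rintro ⟨h1, h2⟩
        rcases (this.2 ⟨Or.inl ⟨rfl, h1⟩, h2⟩).1 with ⟨_, h⟩ | ⟨h, _⟩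
        · exact ⟨h, h2⟩
        · exact absurd rfl h
    · -- i ≠ j
      have h1 : ∀ w ∈ cN G u ∩ I, w = v := by
        rintro w ⟨hw1, hw2⟩
        rcases (key w i).1 ⟨Or.inl ⟨rfl, hw1⟩, hw2⟩ with ⟨⟨h, _⟩ | ⟨_, h⟩, _⟩
        · exact absurd h hij
        · exact h
      have h2 : ∀ w ∈ cN G v ∩ I, w = u := by
        rintro w ⟨hw1, hw2⟩
        rcases (key w j).2 ⟨Or.inl ⟨rfl, hw1⟩, hw2⟩ with ⟨⟨h, _⟩ | ⟨_, h⟩, _⟩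
        · exact absurd h.symm hij
        · exact h
      obtain ⟨w, hw⟩ := hI.1 u
      have hvI : v ∈ I := (h1 w hw) ▸ hw.2
      obtain ⟨w', hw'⟩ := hI.1 v
      have huI : u ∈ I := (h2 w' hw') ▸ hw'.2
      have huv : u = v := h1 u ⟨Set.mem_insert u _, huI⟩
      obtain ⟨z, hzI, hz⟩ := hnoiso u huI
      have hzu : z = u := huv ▸ h1 z ⟨Set.mem_insert_of_mem _ hz, hzI⟩
      exact G.irrefl (hzu ▸ hz)

/-- if G has a minimum ID code I whose induced subgraph has no isolated
vertices, then I × {1,2} is an ID code of the prism and γ^ID(G □ K₂) ≤ 2γ^ID(G). -/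
theorem stmt6 {V : Type} [Fintype V] (G : SimpleGraph V) (I : Set V)
    (hI : IsIDCode G I) (hmin : I.ncard = idNum G)
    (hnoiso : ∀ u ∈ I, ∃ v ∈ I, G.Adj u v) :
    IsIDCode (prism G) (I ×ˢ (Set.univ : Set (Fin 2))) ∧
      idNum (prism G) ≤ 2 * idNum G := by
  have hcode := prism_code G I hI hnoiso
  refine ⟨hcode, Nat.sInf_le ⟨I ×ˢ (Set.univ : Set (Fin 2)), hcode, ?_⟩⟩
  rw [← Nat.card_coe_set_eq, Nat.card_congr (Equiv.Set.prod I Set.univ), Nat.card_prod,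
    Nat.card_coe_set_eq, Nat.card_coe_set_eq, hmin, Set.ncard_univ]
  simp [Nat.card_eq_fintype_card, Nat.mul_comm]
end

section
/- Let n ≥ 2 and let H be a graph obtained from a connected graph on vertices u₁,…,uₙ by attaching, for each i, at least one new pendant vertex (vertex of degree 1) adjacent to uᵢ. Then γ^{ID}(H □ K₂) = |V(H)|. -/
open SimpleGraph

variable {V W : Type} 

section Stmt7Aux

variable {V : Type}

lemma mem_cN' {G : SimpleGraph V} {v w : V} : w ∈ cN G v ↔ w = v ∨ G.Adj v w := by
  simp [cN, SimpleGraph.mem_neighborSet]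

lemma mem_cN_prism_s7 {H : SimpleGraph V} {p q : V × Fin 2} :
    q ∈ cN (prism H) p ↔
      q = p ∨ (H.Adj p.1 q.1 ∧ p.2 = q.2) ∨ (p.2 ≠ q.2 ∧ p.1 = q.1) := by
  rw [mem_cN', SimpleGraph.boxProd_adj, SimpleGraph.top_adj]

lemma adj_pend {H : SimpleGraph V} {p u x : V} (hp : H.neighborSet p = {u}) :
    H.Adj p x ↔ x = u := by
  constructor
  · intro h
    have : x ∈ H.neighborSet p := h
    rwa [hp, Set.mem_singleton_iff] at this
  · rintro rfl
    show x ∈ H.neighborSet p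
    rw [hp]; exact rfl

lemma pendant_cN {H : SimpleGraph V} {p u : V} (hp : H.neighborSet p = {u}) (i : Fin 2) :
    cN (prism H) (p, i) = {(p, 0), (p, 1), (u, i)} := by
  ext ⟨q1, q2⟩
  rw [mem_cN_prism_s7]
  simp only [Set.mem_insert_iff, Set.mem_singleton_iff, Prod.mk.injEq, adj_pend hp]
  rcases (by omega : i = 0 ∨ i = 1) with rfl | rfl <;>
    rcases (by omega : q2 = 0 ∨ q2 = 1) with rfl | rfl <;>
    simp <;> tauto

/-- Key fact A: the column of the support vertex meets the code. -/
lemma lemA {H : SimpleGraph V} {C : Set (V × Fin 2)} (hC : IsIDCode (prism H) C)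
    {p u : V} (hp : H.neighborSet p = {u}) : (u, 0) ∈ C ∨ (u, 1) ∈ C := by
  by_contra h
  push_neg at h
  refine hC.2 (p, 0) (p, 1) (by simp) ?_
  rw [pendant_cN hp, pendant_cN hp]
  ext q
  simp only [Set.mem_inter_iff, Set.mem_insert_iff, Set.mem_singleton_iff]
  constructor
  · rintro ⟨(rfl | rfl | rfl), hq⟩
    · exact ⟨Or.inl rfl, hq⟩
    · exact ⟨Or.inr (Or.inl rfl), hq⟩
    · exact absurd hq h.1
  · rintro ⟨(rfl | rfl | rfl), hq⟩
    · exact ⟨Or.inl rfl, hq⟩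
    · exact ⟨Or.inr (Or.inl rfl), hq⟩
    · exact absurd hq h.2

/-- Key fact B: an empty pendant column forces both support-column vertices in the code. -/
lemma lemB {H : SimpleGraph V} {C : Set (V × Fin 2)} (hC : IsIDCode (prism H) C)
    {p u : V} (hp : H.neighborSet p = {u}) (h0 : (p, 0) ∉ C) (h1 : (p, 1) ∉ C)
    (i : Fin 2) : (u, i) ∈ C := by
  obtain ⟨q, hq1, hq2⟩ := hC.1 (p, i)
  rw [pendant_cN hp] at hq1
  rcases hq1 with rfl | rfl | rfl
  · exact absurd hq2 h0
  · exact absurd hq2 h1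
  · exact hq2

/-- Key fact C: two pendants of the same support cannot both have empty columns. -/
lemma lemC {H : SimpleGraph V} {C : Set (V × Fin 2)} (hC : IsIDCode (prism H) C)
    {p p' u : V} (hp : H.neighborSet p = {u}) (hp' : H.neighborSet p' = {u})
    (hne : p ≠ p') (h0 : (p, 0) ∉ C) (h1 : (p, 1) ∉ C)
    (h0' : (p', 0) ∉ C) (h1' : (p', 1) ∉ C) : False := by
  refine hC.2 (p, 0) (p', 0) (by simp [hne]) ?_
  rw [pendant_cN hp, pendant_cN hp']
  ext q
  simp only [Set.mem_inter_iff, Set.mem_insert_iff, Set.mem_singleton_iff]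
  constructor
  · rintro ⟨(rfl | rfl | rfl), hq⟩
    · exact absurd hq h0
    · exact absurd hq h1
    · exact ⟨Or.inr (Or.inr rfl), hq⟩
  · rintro ⟨(rfl | rfl | rfl), hq⟩
    · exact absurd hq h0'
    · exact absurd hq h1'
    · exact ⟨Or.inr (Or.inr rfl), hq⟩

end Stmt7Aux

section Stmt7Main

lemma adj_of_reachable {α : Type*} {G : SimpleGraph α} {a b : α} (hne : a ≠ b)
    (h : G.Reachable a b) : ∃ c, G.Adj a c := by
  obtain ⟨w⟩ := h
  cases w with
  | nil => exact absurd rfl hne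
  | cons h _ => exact ⟨_, h⟩

lemma lower_bound {V : Type} [Fintype V] (H : SimpleGraph V) (U : Set V)
    (hpend : ∀ v : V, v ∉ U → ∃ u ∈ U, H.neighborSet v = {u})
    (hatt : ∀ u ∈ U, ∃ v : V, v ∉ U ∧ H.Adj u v)
    (C : Set (V × Fin 2)) (hC : IsIDCode (prism H) C) :
    Fintype.card V ≤ C.ncard := by
  classical
  have hsupp : ∀ v : V, ∃ u : V, (v ∈ U → u = v) ∧ (v ∉ U → H.neighborSet v = {u}) := by
    intro v
    by_cases hv : v ∈ U
    · exact ⟨v, fun _ => rfl, fun h => absurd hv h⟩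
    · obtain ⟨u, _, hnb⟩ := hpend v hv
      exact ⟨u, fun h => absurd h hv, fun _ => hnb⟩
  choose supp hsuppEq hsuppNb using hsupp
  have hpend' : ∀ u ∈ U, ∃ p : V, p ∉ U ∧ H.neighborSet p = {u} := by
    intro u hu
    obtain ⟨v, hv, hadj⟩ := hatt u hu
    obtain ⟨u', _, hnb⟩ := hpend v hv
    have hu' : u ∈ H.neighborSet v := hadj.symm
    rw [hnb, Set.mem_singleton_iff] at hu'
    exact ⟨v, hv, hu' ▸ hnb⟩
  have hcol : ∀ v : V, (v, 0) ∉ C → (v, 1) ∉ C → H.neighborSet v = {supp v} := by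
    intro v h0 h1
    have hvU : v ∉ U := by
      intro hv
      obtain ⟨p, _, hnb⟩ := hpend' v hv
      rcases lemA hC hnb with h | h
      · exact h0 h
      · exact h1 h
    exact hsuppNb v hvU
  set φ : V → V × Fin 2 := fun v =>
    if (v, 0) ∈ C then (v, 0) else if (v, 1) ∈ C then (v, 1) else (supp v, 1) with hφ
  have claim1 : ∀ v : V, ((v, 0) ∈ C ∨ (v, 1) ∈ C) → (φ v).1 = v ∧ φ v ∈ C := by
    intro v hv
    by_cases h0 : (v, 0) ∈ C
    · simp [hφ, h0]
    · have h1 : (v, 1) ∈ C := hv.resolve_left h0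
      simp [hφ, h0, h1]
  have claim2 : ∀ v : V, (v, 0) ∉ C → (v, 1) ∉ C → φ v = (supp v, 1) := by
    intro v h0 h1
    simp [hφ, h0, h1]
  have hmem : ∀ v, φ v ∈ C := by
    intro v
    by_cases h0 : (v, 0) ∈ C
    · exact (claim1 v (Or.inl h0)).2
    by_cases h1 : (v, 1) ∈ C
    · exact (claim1 v (Or.inr h1)).2
    · rw [claim2 v h0 h1]
      exact lemB hC (hcol v h0 h1) h0 h1 1
  have key : ∀ v w : V, ((v, 0) ∉ C ∧ (v, 1) ∉ C) → ((w, 0) ∈ C ∨ (w, 1) ∈ C) →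
      φ v ≠ φ w := by
    intro v w ⟨hv0, hv1⟩ hw heq
    have h1 := claim2 v hv0 hv1
    have h2 := (claim1 w hw).1
    have hws : w = supp v := by rw [← h2, ← heq, h1]
    have hw0 : (w, 0) ∈ C := by
      rw [hws]; exact lemB hC (hcol v hv0 hv1) hv0 hv1 0
    have : φ w = (w, 0) := by simp [hφ, hw0]
    rw [h1, this] at heq
    have := congrArg Prod.snd heq
    simp at this
  have hinj : Function.Injective φ := by
    intro v w heq
    by_cases hv : (v, 0) ∈ C ∨ (v, 1) ∈ C
    · by_cases hw : (w, 0) ∈ C ∨ (w, 1) ∈ C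
      · rw [← (claim1 v hv).1, ← (claim1 w hw).1, heq]
      · push_neg at hw
        exact absurd heq.symm (key w v hw hv)
    · push_neg at hv
      by_cases hw : (w, 0) ∈ C ∨ (w, 1) ∈ C
      · exact absurd heq (key v w hv hw)
      · push_neg at hw
        have h1 := claim2 v hv.1 hv.2
        have h2 := claim2 w hw.1 hw.2
        rw [h1, h2] at heq
        have hss : supp v = supp w := congrArg Prod.fst heq
        by_contra hne
        exact lemC hC (hcol v hv.1 hv.2) (hss ▸ hcol w hw.1 hw.2) hne
          hv.1 hv.2 hw.1 hw.2
  calc Fintype.card V = (Set.univ : Set V).ncard := by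
        rw [Set.ncard_univ, Nat.card_eq_fintype_card]
    _ = (φ '' Set.univ).ncard := (Set.ncard_image_of_injective _ hinj).symm
    _ ≤ C.ncard := Set.ncard_le_ncard (by rintro q ⟨v, _, rfl⟩; exact hmem v) C.toFinite

end Stmt7Main

section Stmt7Upper

lemma pendOf {V : Type} (H : SimpleGraph V) (U : Set V)
    (hpend : ∀ v : V, v ∉ U → ∃ u ∈ U, H.neighborSet v = {u})
    (hatt : ∀ u ∈ U, ∃ v : V, v ∉ U ∧ H.Adj u v) :
    ∀ u ∈ U, ∃ p : V, p ∉ U ∧ H.neighborSet p = {u} := by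
  intro u hu
  obtain ⟨v, hv, hadj⟩ := hatt u hu
  obtain ⟨u', _, hnb⟩ := hpend v hv
  have hu' : u ∈ H.neighborSet v := hadj.symm
  rw [hnb, Set.mem_singleton_iff] at hu'
  exact ⟨v, hv, hu' ▸ hnb⟩

lemma twinfree_of {V : Type} (H : SimpleGraph V) (U : Set V)
    (h2 : 1 < U.ncard)
    (hconn : (H.induce U).Connected)
    (hpend : ∀ v : V, v ∉ U → ∃ u ∈ U, H.neighborSet v = {u})
    (hatt : ∀ u ∈ U, ∃ v : V, v ∉ U ∧ H.Adj u v) :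
    ∀ v w : V, v ≠ w → cN H v ≠ cN H w := by
  have main : ∀ v w : V, v ∈ U → v ≠ w → cN H v = cN H w → False := by
    intro v w hv hne heq
    by_cases hw : w ∈ U
    · -- both in U: pendant of v distinguishes
      obtain ⟨p, hpU, hnb⟩ := pendOf H U hpend hatt v hv
      have hp1 : p ∈ cN H v := mem_cN'.2 (Or.inr ((adj_pend hnb).2 rfl).symm)
      rw [heq] at hp1
      rcases mem_cN'.1 hp1 with rfl | hadj
      · exact hpU hw
      · have : w ∈ H.neighborSet p := hadj.symm
        rw [hnb, Set.mem_singleton_iff] at this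
        exact hne this.symm
    · -- v ∈ U, w a pendant
      obtain ⟨u, _, hnb⟩ := hpend w hw
      -- v has a neighbor in U
      obtain ⟨y, hy, hyne⟩ := Set.exists_ne_of_one_lt_ncard h2 v
      have hsne : (⟨v, hv⟩ : U) ≠ ⟨y, hy⟩ := by
        intro h; exact hyne (congrArg Subtype.val h).symm
      obtain ⟨c, hc⟩ := adj_of_reachable hsne (hconn.preconnected _ _)
      have hcx : H.Adj v (c : V) := by simpa using hc
      have hx1 : (c : V) ∈ cN H v := mem_cN'.2 (Or.inr hcx)
      rw [heq] at hx1
      rcases mem_cN'.1 hx1 with h | hadj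
      · exact hw (h ▸ c.2)
      · have : (c : V) ∈ H.neighborSet w := hadj
        rw [hnb, Set.mem_singleton_iff] at this
        -- c = u; but also need contradiction: v adj w means v = u
        have hvw : H.Adj v w := by
          have : w ∈ cN H w := mem_cN'.2 (Or.inl rfl)
          rw [← heq] at this
          rcases mem_cN'.1 this with h | h
          · exact absurd (h ▸ hv) hw
          · exact h
        have hvu : v = u := by
          have : v ∈ H.neighborSet w := hvw.symm
          rwa [hnb, Set.mem_singleton_iff] at this
        rw [this, ← hvu] at hcx
        exact hcx.ne rfl
  intro v w hne heq
  by_cases hv : v ∈ U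
  · exact absurd heq (fun h => main v w hv hne h)
  by_cases hw : w ∈ U
  · exact absurd heq.symm (fun h => main w v hw hne.symm h)
  · -- both pendants
    obtain ⟨a, haU, hnb⟩ := hpend v hv
    have hvw : H.Adj v w := by
      have : w ∈ cN H w := mem_cN'.2 (Or.inl rfl)
      rw [← heq] at this
      rcases mem_cN'.1 this with h | h
      · exact absurd h hne.symm
      · exact h
    have : w ∈ H.neighborSet v := hvw
    rw [hnb, Set.mem_singleton_iff] at this
    exact hw (this ▸ haU)

lemma upper_code {V : Type} [Fintype V] (H : SimpleGraph V)
    (htf : ∀ v w : V, v ≠ w → cN H v ≠ cN H w)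
    (hiso : ∀ v : V, ∃ x, H.Adj v x) :
    ∃ C : Set (V × Fin 2), IsIDCode (prism H) C ∧ C.ncard = Fintype.card V := by
  classical
  set C0 : Set (V × Fin 2) := (fun v => (v, (0 : Fin 2))) '' Set.univ with hC0def
  have hmemC : ∀ (x : V) (j : Fin 2), (x, j) ∈ C0 ↔ j = 0 := by
    intro x j
    simp only [hC0def, Set.image_univ, Set.mem_range, Prod.mk.injEq]
    constructor
    · rintro ⟨v, _, rfl⟩; rfl
    · rintro rfl; exact ⟨x, rfl, rfl⟩
  have hsnd : ∀ q ∈ C0, q.2 = 0 := by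
    rintro ⟨x, j⟩ hq; exact (hmemC x j).1 hq
  have trace0 : ∀ v x : V, ((x, (0:Fin 2)) ∈ cN (prism H) (v, 0) ∩ C0) ↔ x ∈ cN H v := by
    intro v x
    rw [Set.mem_inter_iff, hmemC, mem_cN_prism_s7, mem_cN']
    simp [Prod.ext_iff]
  have trace1 : ∀ v x : V, ((x, (0:Fin 2)) ∈ cN (prism H) (v, 1) ∩ C0) ↔ x = v := by
    intro v x
    simp only [Set.mem_inter_iff, mem_cN_prism_s7, hmemC]
    constructor
    · rintro ⟨(h | ⟨_, h⟩ | ⟨_, h⟩), _⟩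
      · exact absurd (congrArg Prod.snd h) (show ¬((0:Fin 2) = 1) by decide)
      · exact absurd h (show ¬((1:Fin 2) = 0) by decide)
      · exact h.symm
    · rintro rfl
      exact ⟨Or.inr (Or.inr ⟨show (1:Fin 2) ≠ 0 by decide, rfl⟩), trivial⟩
  have cross : ∀ v w : V, cN (prism H) (v, 0) ∩ C0 = cN (prism H) (w, 1) ∩ C0 → False := by
    intro v w heq
    have hv : v = w := (trace1 w v).1 (heq ▸ (trace0 v v).2 (mem_cN'.2 (Or.inl rfl)))
    obtain ⟨x, hx⟩ := hiso v
    have : x = w := (trace1 w x).1 (heq ▸ (trace0 v x).2 (mem_cN'.2 (Or.inr hx)))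
    exact hx.ne (hv.trans this.symm)
  refine ⟨C0, ⟨?_, ?_⟩, ?_⟩
  · -- dominating
    rintro ⟨v, i⟩
    refine ⟨(v, 0), ?_, (hmemC v 0).2 rfl⟩
    rw [mem_cN_prism_s7]
    rcases (by omega : i = 0 ∨ i = 1) with rfl | rfl
    · exact Or.inl rfl
    · exact Or.inr (Or.inr ⟨show (1:Fin 2) ≠ 0 by decide, rfl⟩)
  · -- identifying
    rintro ⟨a1, a2⟩ ⟨b1, b2⟩ hne heq
    rcases (by omega : a2 = 0 ∨ a2 = 1) with rfl | rfl <;>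
      rcases (by omega : b2 = 0 ∨ b2 = 1) with rfl | rfl
    · have hab : a1 ≠ b1 := fun h => hne (by rw [h])
      refine htf a1 b1 hab ?_
      ext x
      rw [← trace0 a1 x, ← trace0 b1 x, heq]
    · exact cross a1 b1 heq
    · exact cross b1 a1 heq.symm
    · have hab : a1 ≠ b1 := fun h => hne (by rw [h])
      have : a1 = b1 := (trace1 b1 a1).1 (heq ▸ (trace1 a1 a1).2 rfl)
      exact hab this
  · rw [hC0def, Set.ncard_image_of_injective _ (fun a b h => (Prod.ext_iff.1 h).1),
      Set.ncard_univ, Nat.card_eq_fintype_card]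

end Stmt7Upper


/-- if H is obtained from a connected graph on a vertex set U of order
n ≥ 2 by attaching at least one pendant vertex to each vertex of U, then
γ^ID(H □ K₂) = |V(H)|. -/
theorem stmt7 {V : Type} [Fintype V] (H : SimpleGraph V) (n : ℕ) (hn : 2 ≤ n)
    (U : Set V) (hUcard : U.ncard = n)
    (hconn : (H.induce U).Connected)
    (hpend : ∀ v : V, v ∉ U → ∃ u ∈ U, H.neighborSet v = {u})
    (hatt : ∀ u ∈ U, ∃ v : V, v ∉ U ∧ H.Adj u v) :
    idNum (prism H) = Fintype.card V := by
  classical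
  have h2 : 1 < U.ncard := by rw [hUcard]; omega
  have hiso : ∀ v : V, ∃ x, H.Adj v x := by
    intro v
    by_cases hv : v ∈ U
    · obtain ⟨w, _, h⟩ := hatt v hv
      exact ⟨w, h⟩
    · obtain ⟨u, _, hnb⟩ := hpend v hv
      exact ⟨u, (adj_pend hnb).2 rfl⟩
  have htf := twinfree_of H U h2 hconn hpend hatt
  obtain ⟨C0, hC0, hcard⟩ := upper_code H htf hiso
  have hmem : Fintype.card V ∈
      {k | ∃ C : Set (V × Fin 2), IsIDCode (prism H) C ∧ C.ncard = k} := ⟨C0, hC0, hcard⟩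
  refine le_antisymm (Nat.sInf_le hmem) ?_
  obtain ⟨C, hC, hk⟩ := Nat.sInf_mem (⟨_, hmem⟩ :
    {k | ∃ C : Set (V × Fin 2), IsIDCode (prism H) C ∧ C.ncard = k}.Nonempty)
  rw [idNum, ← hk]
  exact lower_bound H U hpend hatt C hC
end

section
/- For any twin-free graphs G and H, γ^{ID}(G □ H) ≥ max{γ^{ID}(G)·ρ₂(H), ρ₂(G)·γ^{ID}(H)}. -/
open SimpleGraph

variable {V W : Type} 

/-!
Fix a 2-packing `S` of `H` and a minimum identifying code `C` of `G □ H`. The slabs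
`V(G) × N[w]`, `w ∈ S`, are pairwise disjoint, so it suffices that each meets `C` in at least
`γ^{ID}(G)` vertices. Let `R = {g | (g, w) ∈ C}` and let `A` be the set of `g` whose column
`{g} × (N[w] \ {w})` misses `C`. The code sees a vertex `(g, w)` with `g ∈ A` only through
`N[g] ∩ R`, so `R` already identifies the vertices of `A`. To a set that is not an identifying
code one can add a vertex that increases the number of distinct nonempty traces `N[g] ∩ R`, of
which there are at most `|V(G)|`; so `R` extends to an identifying code of `G` with at most
`|V(G) \ A|` more vertices, and each `g ∉ A` is paid for by a code vertex of the slab off the row.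
-/

namespace IdentifyingCode

variable {α β : Type} {G : SimpleGraph α} {H : SimpleGraph β}

lemma mem_cN_self (G : SimpleGraph α) (v : α) : v ∈ cN G v := Set.mem_insert _ _

lemma mem_cN {u v : α} : u ∈ cN G v ↔ u = v ∨ G.Adj v u := Iff.rfl

lemma mem_cN_boxProd {p q : α × β} :
    q ∈ cN (G □ H) p ↔ q.2 = p.2 ∧ q.1 ∈ cN G p.1 ∨ q.1 = p.1 ∧ q.2 ∈ cN H p.2 := by
  obtain ⟨a, b⟩ := p
  obtain ⟨c, d⟩ := q
  simp only [mem_cN, boxProd_adj, Prod.mk.injEq]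
  tauto

lemma mk_mem_cN_boxProd_left {a x : α} {b : β} : (x, b) ∈ cN (G □ H) (a, b) ↔ x ∈ cN G a := by
  rw [mem_cN_boxProd]
  constructor
  · rintro (⟨-, hx⟩ | ⟨rfl, -⟩)
    exacts [hx, mem_cN_self G x]
  · exact fun hx => Or.inl ⟨rfl, hx⟩

lemma mk_mem_cN_boxProd_right {a : α} {b y : β} : (a, y) ∈ cN (G □ H) (a, b) ↔ y ∈ cN H b := by
  rw [mem_cN_boxProd]
  constructor
  · rintro (⟨rfl, -⟩ | ⟨-, hy⟩)
    exacts [mem_cN_self H y, hy]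
  · exact fun hy => Or.inr ⟨rfl, hy⟩

lemma twinFree_boxProd (hG : TwinFree G) (hH : TwinFree H) : TwinFree (G □ H) := by
  rintro ⟨a, b⟩ ⟨c, d⟩ h
  have hcd : (c, d) ∈ cN (G □ H) (a, b) := h ▸ mem_cN_self _ _
  rcases mem_cN_boxProd.1 hcd with ⟨rfl, -⟩ | ⟨rfl, -⟩
  · rw [hG a c (Set.ext fun x => by
      rw [← mk_mem_cN_boxProd_left (H := H) (b := d), h, mk_mem_cN_boxProd_left])]
  · rw [hH b d (Set.ext fun y => by
      rw [← mk_mem_cN_boxProd_right (G := G) (a := c), h, mk_mem_cN_boxProd_right])]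

lemma isIDCode_univ (hG : TwinFree G) : IsIDCode G Set.univ :=
  ⟨fun v => ⟨v, mem_cN_self G v, trivial⟩, fun u v huv h => huv (hG u v (by simpa using h))⟩

lemma idNum_le_ncard {C : Set α} (hC : IsIDCode G C) : idNum G ≤ C.ncard :=
  Nat.sInf_le ⟨C, hC, rfl⟩

lemma exists_isIDCode_ncard_eq_idNum (hG : TwinFree G) :
    ∃ C : Set α, IsIDCode G C ∧ C.ncard = idNum G :=
  Nat.sInf_mem (s := {k | ∃ C : Set α, IsIDCode G C ∧ C.ncard = k})
    ⟨Set.univ.ncard, Set.univ, isIDCode_univ hG, rfl⟩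

lemma preimage_cN (e : G ≃g H) (v : α) : e ⁻¹' cN H (e v) = cN G v := by
  ext x
  simp [mem_cN, e.map_adj_iff]

lemma IsIDCode.preimage (e : G ≃g H) {C : Set β} (hC : IsIDCode H C) :
    IsIDCode G (e ⁻¹' C) := by
  have htrace : ∀ v, cN G v ∩ e ⁻¹' C = e ⁻¹' (cN H (e v) ∩ C) := fun v => by
    rw [Set.preimage_inter, preimage_cN]
  refine ⟨fun v => ?_, fun u v huv h => ?_⟩
  · rw [htrace]
    exact (hC.1 (e v)).preimage e.surjective
  · rw [htrace, htrace] at h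
    exact hC.2 (e u) (e v) (e.injective.ne huv) (Set.preimage_injective.2 e.surjective h)

lemma idNum_congr (e : G ≃g H) : idNum G = idNum H := by
  have sizes_subset : ∀ {α β : Type} {G : SimpleGraph α} {H : SimpleGraph β} (e : G ≃g H),
      {k | ∃ C : Set β, IsIDCode H C ∧ C.ncard = k} ⊆
        {k | ∃ C : Set α, IsIDCode G C ∧ C.ncard = k} := by
    rintro α β G H e _ ⟨C, hC, rfl⟩
    exact ⟨e ⁻¹' C, IsIDCode.preimage e hC, Set.ncard_preimage_of_injective_subset_range e.injective
      (by simp [e.surjective.range_eq])⟩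
  exact congrArg sInf ((sizes_subset e.symm).antisymm (sizes_subset e))

lemma ncard_lt_ncard_of_subset_image_sdiff_singleton {γ δ : Type} [Finite γ] {A : Set δ}
    {B : Set γ} {f : γ → δ} {b : γ} (hb : b ∈ B) (hA : A ⊆ f '' (B \ {b})) : A.ncard < B.ncard :=
  calc A.ncard ≤ (f '' (B \ {b})).ncard := Set.ncard_le_ncard hA
    _ ≤ (B \ {b}).ncard := Set.ncard_image_le (Set.toFinite _)
    _ < B.ncard := Set.ncard_sdiff_singleton_lt_of_mem hb

def traces (G : SimpleGraph α) (R : Set α) : Set (Set α) :=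
  Set.range (fun g => cN G g ∩ R) \ {∅}

lemma mem_traces {R t : Set α} : t ∈ traces G R ↔ (∃ g, cN G g ∩ R = t) ∧ t.Nonempty := by
  simp [traces, Set.nonempty_iff_ne_empty]

lemma ncard_traces_le [Finite α] (G : SimpleGraph α) (R : Set α) :
    (traces G R).ncard ≤ Nat.card α :=
  calc (traces G R).ncard ≤ (Set.range fun g => cN G g ∩ R).ncard :=
        Set.ncard_le_ncard Set.sdiff_subset (Set.toFinite _)
    _ ≤ Nat.card α := by
      rw [← Set.image_univ, ← Set.ncard_univ]
      exact Set.ncard_image_le (Set.toFinite _)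

lemma ncard_traces_lt_insert [Finite α] {R : Set α} {x u : α} (hxR : x ∉ R) (hxu : x ∈ cN G u)
    (hu : cN G u ∩ R = ∅ ∨ ∃ v, x ∉ cN G v ∧ cN G v ∩ R = cN G u ∩ R) :
    (traces G R).ncard < (traces G (insert x R)).ncard := by
  have erase_x : ∀ h, (cN G h ∩ insert x R) \ {x} = cN G h ∩ R := fun h => by
    rw [Set.inter_sdiff_assoc, Set.insert_sdiff_self_of_notMem hxR]
  have hnew : cN G u ∩ insert x R ∈ traces G (insert x R) :=
    mem_traces.2 ⟨⟨u, rfl⟩, x, hxu, Set.mem_insert x R⟩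
  -- removing `x` maps the traces of `insert x R` other than the new one onto those of `R`
  refine ncard_lt_ncard_of_subset_image_sdiff_singleton (f := (· \ {x})) hnew ?_
  intro t ht
  obtain ⟨⟨h, rfl⟩, hne⟩ := mem_traces.1 ht
  have grow : ∀ v, cN G v ∩ R ⊆ cN G v ∩ insert x R := fun v =>
    Set.inter_subset_inter_right _ (Set.subset_insert x R)
  by_cases hhu : cN G h ∩ R = cN G u ∩ R
  · obtain hempty | ⟨v, hxv, hvu⟩ := hu
    · exact absurd (hhu.trans hempty) hne.ne_empty
    refine ⟨cN G v ∩ insert x R, ⟨mem_traces.2 ⟨⟨v, rfl⟩, ?_⟩, fun hv => hxv ?_⟩, ?_⟩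
    · exact (hvu.trans hhu.symm ▸ hne).mono (grow v)
    · exact (Set.mem_singleton_iff.1 hv ▸ Set.mem_inter hxu (Set.mem_insert x R)).1
    · exact (erase_x v).trans (hvu.trans hhu.symm)
  · refine ⟨cN G h ∩ insert x R, ⟨mem_traces.2 ⟨⟨h, rfl⟩, hne.mono (grow h)⟩, fun hv => hhu ?_⟩,
      erase_x h⟩
    rw [← erase_x h, Set.mem_singleton_iff.1 hv, erase_x u]

lemma exists_ncard_traces_lt_insert [Finite α] (hG : TwinFree G) {R : Set α}
    (hR : ¬ IsIDCode G R) : ∃ x, (traces G R).ncard < (traces G (insert x R)).ncard := by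
  by_cases hdom : IsDomSet G R
  · obtain ⟨u, v, huv, htr⟩ : ∃ u v, u ≠ v ∧ cN G u ∩ R = cN G v ∩ R := by
      simpa [IsIDCode, hdom] using hR
    obtain ⟨x, hx⟩ : ∃ x, ¬ (x ∈ cN G u ↔ x ∈ cN G v) := by
      by_contra! h
      exact huv (hG u v (Set.ext h))
    have notMem : ∀ {u v}, cN G u ∩ R = cN G v ∩ R → x ∈ cN G u → x ∉ cN G v → x ∉ R :=
      fun h hu hv hxR => hv (h ▸ Set.mem_inter hu hxR).1
    by_cases hxu : x ∈ cN G u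
    · have hxv : x ∉ cN G v := fun hxv => hx (iff_of_true hxu hxv)
      exact ⟨x, ncard_traces_lt_insert (notMem htr hxu hxv) hxu (Or.inr ⟨v, hxv, htr.symm⟩)⟩
    · have hxv : x ∈ cN G v := by_contra fun hxv => hx (iff_of_false hxu hxv)
      exact ⟨x, ncard_traces_lt_insert (notMem htr.symm hxv hxu) hxv (Or.inr ⟨u, hxu, htr⟩)⟩
  · obtain ⟨g, hg⟩ : ∃ g, cN G g ∩ R = ∅ := by
      simpa [IsDomSet, Set.not_nonempty_iff_eq_empty] using hdom
    have hgR : g ∉ R := fun hgR => (hg ▸ Set.mem_inter (mem_cN_self G g) hgR : g ∈ (∅ : Set α))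
    exact ⟨g, ncard_traces_lt_insert hgR (mem_cN_self G g) (Or.inl hg)⟩

theorem idNum_add_ncard_traces_le [Finite α] (hG : TwinFree G) (R : Set α) :
    idNum G + (traces G R).ncard ≤ R.ncard + Nat.card α := by
  by_cases hR : IsIDCode G R
  · have := idNum_le_ncard hR
    have := ncard_traces_le G R
    omega
  · obtain ⟨x, hx⟩ := exists_ncard_traces_lt_insert hG hR
    have := ncard_traces_le G (insert x R)
    have := idNum_add_ncard_traces_le hG (insert x R)
    have := Set.ncard_insert_le x R
    omega
termination_by Nat.card α - (traces G R).ncard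

theorem idNum_le_ncard_add_ncard_compl [Finite α] (hG : TwinFree G) {R A : Set α}
    (hinj : Set.InjOn (fun g => cN G g ∩ R) A) (hne : ∀ g ∈ A, (cN G g ∩ R).Nonempty) :
    idNum G ≤ R.ncard + Aᶜ.ncard := by
  have hA : A.ncard ≤ (traces G R).ncard :=
    Set.ncard_le_ncard_of_injOn _ (fun g hg => mem_traces.2 ⟨⟨g, rfl⟩, hne g hg⟩) hinj
  have := idNum_add_ncard_traces_le hG R
  have := Set.ncard_add_ncard_compl A
  omega

lemma cN_boxProd_inter_eq_image {C : Set (α × β)} {g : α} {w : β}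
    (hg : ∀ y ∈ cN H w, y ≠ w → (g, y) ∉ C) :
    cN (G □ H) (g, w) ∩ C = (fun x => (x, w)) '' (cN G g ∩ {x | (x, w) ∈ C}) := by
  ext ⟨a, b⟩
  simp only [Set.mem_inter_iff, mem_cN_boxProd, Set.mem_image, Set.mem_ofPred_eq, Prod.mk.injEq]
  constructor
  · rintro ⟨⟨rfl, ha⟩ | ⟨rfl, hb⟩, habC⟩
    · exact ⟨a, ⟨ha, habC⟩, rfl, rfl⟩
    · by_cases hbw : b = w
      · subst hbw
        exact ⟨a, ⟨mem_cN_self G a, habC⟩, rfl, rfl⟩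
      · exact absurd habC (hg b hb hbw)
  · rintro ⟨x, ⟨hx, hxC⟩, rfl, rfl⟩
    exact ⟨Or.inl ⟨rfl, hx⟩, hxC⟩

theorem idNum_le_ncard_slab [Finite α] [Finite β] (hG : TwinFree G) {C : Set (α × β)}
    (hC : IsIDCode (G □ H) C) (w : β) : idNum G ≤ {p ∈ C | p.2 ∈ cN H w}.ncard := by
  set R : Set α := {x | (x, w) ∈ C}
  set A : Set α := {g | ∀ y ∈ cN H w, y ≠ w → (g, y) ∉ C}
  set slab := {p ∈ C | p.2 ∈ cN H w}
  set row := (fun x => (x, w)) '' R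
  have hinj : Set.InjOn (fun g => cN G g ∩ R) A := fun g hg g' hg' h => by
    by_contra hne
    refine hC.2 (g, w) (g', w) (by simpa using hne) ?_
    rw [cN_boxProd_inter_eq_image hg, cN_boxProd_inter_eq_image hg']
    exact congrArg _ h
  have hne : ∀ g ∈ A, (cN G g ∩ R).Nonempty := fun g hg =>
    (cN_boxProd_inter_eq_image hg ▸ hC.1 (g, w)).of_image
  have hrow : row ⊆ slab := by
    rintro _ ⟨x, hx, rfl⟩
    exact ⟨hx, mem_cN_self H w⟩
  have hcompl : Aᶜ ⊆ Prod.fst '' (slab \ row) := fun g hg => by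
    obtain ⟨y, hy, hyw, hgy⟩ : ∃ y ∈ cN H w, y ≠ w ∧ (g, y) ∈ C := by simpa [A] using hg
    exact ⟨(g, y), ⟨⟨hgy, hy⟩, by rintro ⟨x, -, hx⟩; exact hyw (congrArg Prod.snd hx).symm⟩, rfl⟩
  calc idNum G ≤ R.ncard + Aᶜ.ncard := idNum_le_ncard_add_ncard_compl hG hinj hne
    _ ≤ row.ncard + (slab \ row).ncard := by
      rw [Set.ncard_image_of_injective R fun x y h => congrArg Prod.fst h]
      exact Nat.add_le_add_left
        ((Set.ncard_le_ncard hcompl).trans (Set.ncard_image_le (Set.toFinite _))) _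
    _ = slab.ncard := by
      rw [add_comm]
      exact Set.ncard_sdiff_add_ncard_of_subset hrow

lemma exists_walk_length_le_one_of_mem_cN {u v : α} (h : u ∈ cN G v) :
    ∃ p : G.Walk v u, p.length ≤ 1 := by
  rcases mem_cN.1 h with rfl | hadj
  · exact ⟨Walk.nil, by simp⟩
  · exact ⟨hadj.toWalk, by simp⟩

lemma disjoint_cN_of_three_le_dist {w w' : β} (h : 3 ≤ H.dist w w') :
    Disjoint (cN H w) (cN H w') := by
  refine Set.disjoint_left.2 fun y hy hy' => ?_
  obtain ⟨p, hp⟩ := exists_walk_length_le_one_of_mem_cN hy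
  obtain ⟨q, hq⟩ := exists_walk_length_le_one_of_mem_cN hy'
  have := H.dist_le (p.append q.reverse)
  simp only [Walk.length_append, Walk.length_reverse] at this
  omega

lemma exists_isTwoPacking_ncard_eq_pack2 [Finite β] (H : SimpleGraph β) :
    ∃ S : Set β, IsTwoPacking H S ∧ S.ncard = pack2 H :=
  Nat.sSup_mem (s := {k | ∃ S : Set β, IsTwoPacking H S ∧ S.ncard = k})
    ⟨0, ∅, fun u hu => hu.elim, Set.ncard_empty β⟩
    ⟨Nat.card β, by rintro _ ⟨S, -, rfl⟩; exact Set.ncard_le_card S⟩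

lemma mul_ncard_le_ncard_of_pairwiseDisjoint {ι γ : Type} [Finite ι] [Finite γ] {S : Set ι}
    {s : ι → Set γ} {C : Set γ} {k : ℕ} (hdisj : S.PairwiseDisjoint s) (hsub : ∀ i ∈ S, s i ⊆ C)
    (hk : ∀ i ∈ S, k ≤ (s i).ncard) : k * S.ncard ≤ C.ncard := by
  obtain ⟨F, rfl⟩ := S.toFinite.exists_finset_coe
  calc k * (F : Set ι).ncard = F.card • k := by rw [Set.ncard_coe_finset, smul_eq_mul, mul_comm]
    _ ≤ ∑ i ∈ F, (s i).ncard := Finset.card_nsmul_le_sum _ _ _ hk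
    _ = (⋃ i ∈ (F : Set ι), s i).ncard := by
      rw [F.finite_toSet.ncard_biUnion (fun _ _ => Set.toFinite _) hdisj, finsum_mem_coe_finset]
    _ ≤ C.ncard := Set.ncard_le_ncard (Set.iUnion₂_subset hsub)

theorem idNum_mul_pack2_le [Finite α] [Finite β] (hG : TwinFree G) (hH : TwinFree H) :
    idNum G * pack2 H ≤ idNum (G □ H) := by
  obtain ⟨S, hS, hScard⟩ := exists_isTwoPacking_ncard_eq_pack2 H
  obtain ⟨C, hC, hCcard⟩ := exists_isIDCode_ncard_eq_idNum (twinFree_boxProd hG hH)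
  rw [← hScard, ← hCcard]
  refine mul_ncard_le_ncard_of_pairwiseDisjoint (s := fun w => {p ∈ C | p.2 ∈ cN H w})
    (fun w hw w' hw' hne => ?_) (fun _ _ => Set.sep_subset _ _)
    (fun w _ => idNum_le_ncard_slab hG hC w)
  exact ((disjoint_cN_of_three_le_dist (hS w hw w' hw' hne)).preimage Prod.snd).mono
    (fun _ hp => hp.2) (fun _ hp => hp.2)

end IdentifyingCode

open IdentifyingCode in
/-- for twin-free G, H:
γ^ID(G □ H) ≥ max(γ^ID(G)·ρ₂(H), ρ₂(G)·γ^ID(H)). -/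
theorem stmt11 {V W : Type} [Fintype V] [Fintype W] (G : SimpleGraph V)
    (H : SimpleGraph W) (hG : TwinFree G) (hH : TwinFree H) :
    max (idNum G * pack2 H) (pack2 G * idNum H) ≤ idNum (G □ H) := by
  refine max_le (idNum_mul_pack2_le hG hH) ?_
  rw [mul_comm, ← idNum_congr (boxProdComm H G)]
  exact idNum_mul_pack2_le hH hG
end

section
/- For every integer k ≥ 3, the prism of Aₖ = P_{2k}^{k−1} satisfies γ^{ID}(Aₖ □ K₂) = γ^{ID}(Aₖ) = 2k − 1. In particular, the set {x₁¹,…,x_{k−1}¹, x_{k+1}¹,…,x_{2k−2}¹, x_k², x_{2k}²} is an identifying code of Aₖ □ K₂ of size 2k − 1. -/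
open SimpleGraph

variable {V W : Type} 

/-- The code `{x₁¹,…,x_{k-1}¹, x_{k+1}¹,…,x_{2k-2}¹, x_k², x_{2k}²}` in `A_k □ K₂`,
with `xᵢ` being the vertex of index `i - 1` in `Fin (2k)`. -/
def codeA (k : ℕ) : Set (Fin (2 * k) × Fin 2) :=
  {p | (p.2 = 0 ∧ ((p.1 : ℕ) + 1 ≤ k - 1 ∨
          (k + 1 ≤ (p.1 : ℕ) + 1 ∧ (p.1 : ℕ) + 1 ≤ 2 * k - 2))) ∨
       (p.2 = 1 ∧ ((p.1 : ℕ) + 1 = k ∨ (p.1 : ℕ) + 1 = 2 * k))}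

section AuxProofs

lemma cNA_mem (k : ℕ) (hk : 1 ≤ k) (i j : Fin (2*k)) :
    j ∈ cN (graphA k) i ↔ |(i : ℤ) - (j : ℤ)| ≤ (k : ℤ) - 1 := by
  rcases eq_or_ne i j with rfl | hne
  · simp [cN]; omega
  · constructor
    · rintro (h | h)
      · exact absurd h.symm hne
      · exact ((by simpa [graphA, SimpleGraph.fromRel_adj, abs_sub_comm] using h : _ ∧ _)).2
    · intro h
      exact Set.mem_insert_of_mem _
        (by simp [graphA, SimpleGraph.fromRel_adj, SimpleGraph.neighborSet, abs_sub_comm, hne.symm]; omega)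

lemma cNA_mem' (k : ℕ) (hk : 1 ≤ k) (u c : ℕ) (hu : u < 2*k) (hc : c < 2*k) :
    (⟨c,hc⟩ : Fin (2*k)) ∈ cN (graphA k) ⟨u,hu⟩ ↔ (u ≤ c + (k-1) ∧ c ≤ u + (k-1)) := by
  rw [cNA_mem k hk, abs_le]
  constructor <;> intro h <;> push_cast at * <;> omega

lemma cNP_mem {V : Type} (G : SimpleGraph V) (u : V) (t : Fin 2) (w : V × Fin 2) :
    w ∈ cN (prism G) (u, t) ↔ (w.2 = t ∧ w.1 ∈ cN G u) ∨ (w.1 = u ∧ w.2 ≠ t) := by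
  obtain ⟨c, s⟩ := w
  simp only [cN, SimpleGraph.neighborSet, SimpleGraph.boxProd_adj, Set.mem_insert_iff,
    Set.mem_setOf_eq, Prod.ext_iff, SimpleGraph.top_adj]
  constructor
  · rintro (⟨rfl,rfl⟩ | ⟨h,rfl⟩ | ⟨h, rfl⟩)
    · exact Or.inl ⟨rfl, Or.inl rfl⟩
    · exact Or.inl ⟨rfl, Or.inr h⟩
    · exact Or.inr ⟨rfl, fun hh => h hh.symm⟩
  · rintro (⟨rfl, (rfl | h)⟩ | ⟨rfl, h⟩)
    · exact Or.inl ⟨rfl, rfl⟩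
    · exact Or.inr (Or.inl ⟨h, rfl⟩)
    · exact Or.inr (Or.inr ⟨fun hh => h hh.symm, rfl⟩)

lemma ne_sets {α : Type*} {X Y : Set α} (h : X ≠ Y) :
    ∃ w, (w ∈ X ∧ w ∉ Y) ∨ (w ∈ Y ∧ w ∉ X) := by
  by_contra hc
  push_neg at hc
  exact h (Set.ext fun w => by have := hc w; tauto)

/-- From separation of the layer-0 pair `(u,0),(v,0)` of the prism, extract a witness. -/
lemma sep_witness (k : ℕ) (hk : 3 ≤ k) (C : Set (Fin (2*k) × Fin 2))
    (hsep : ∀ u v : Fin (2*k) × Fin 2, u ≠ v →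
      cN (prism (graphA k)) u ∩ C ≠ cN (prism (graphA k)) v ∩ C)
    (u v : ℕ) (hu : u < 2*k) (hv : v < 2*k) (huv : u ≠ v) :
    ∃ c, ∃ hc : c < 2*k,
      (((⟨c,hc⟩ : Fin (2*k)), (0:Fin 2)) ∈ C ∧
        (((u ≤ c + (k-1) ∧ c ≤ u + (k-1)) ∧ ¬(v ≤ c + (k-1) ∧ c ≤ v + (k-1))) ∨
         ((v ≤ c + (k-1) ∧ c ≤ v + (k-1)) ∧ ¬(u ≤ c + (k-1) ∧ c ≤ u + (k-1))))) ∨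
      (((⟨c,hc⟩ : Fin (2*k)), (1:Fin 2)) ∈ C ∧ (c = u ∨ c = v)) := by
  have hk1 : 1 ≤ k := by omega
  set U : Fin (2*k) := ⟨u, hu⟩
  set Vv : Fin (2*k) := ⟨v, hv⟩
  have hne : ((U, (0:Fin 2)) : Fin (2*k) × Fin 2) ≠ (Vv, 0) := by
    simp only [Prod.mk.injEq, and_true, ne_eq]
    intro h; exact huv (by simpa [U, Vv, Fin.ext_iff] using h)
  obtain ⟨w, hw⟩ := ne_sets (hsep (U, 0) (Vv, 0) hne)
  obtain ⟨cf, s⟩ := w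
  -- symmetrize: in both cases we get membership info
  have key : (cf, s) ∈ C ∧
      (((cf,s) ∈ cN (prism (graphA k)) (U,0) ∧ (cf,s) ∉ cN (prism (graphA k)) (Vv,0)) ∨
       ((cf,s) ∈ cN (prism (graphA k)) (Vv,0) ∧ (cf,s) ∉ cN (prism (graphA k)) (U,0))) := by
    rcases hw with ⟨⟨h1, h2⟩, h3⟩ | ⟨⟨h1, h2⟩, h3⟩
    · exact ⟨h2, Or.inl ⟨h1, fun hmem => h3 ⟨hmem, h2⟩⟩⟩
    · exact ⟨h2, Or.inr ⟨h1, fun hmem => h3 ⟨hmem, h2⟩⟩⟩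
  obtain ⟨hwC, hdiff⟩ := key
  have hs : s = 0 ∨ s = 1 := by omega
  rcases hs with rfl | rfl
  · -- layer 0 witness
    refine ⟨cf.val, cf.isLt, Or.inl ⟨by simpa using hwC, ?_⟩⟩
    have hU : ((cf, (0:Fin 2)) ∈ cN (prism (graphA k)) (U,0)) ↔ cf ∈ cN (graphA k) U := by
      rw [cNP_mem]; simp
    have hV : ((cf, (0:Fin 2)) ∈ cN (prism (graphA k)) (Vv,0)) ↔ cf ∈ cN (graphA k) Vv := by
      rw [cNP_mem]; simp
    rw [hU, hV] at hdiff
    have e1 : cf ∈ cN (graphA k) U ↔ (u ≤ cf.val + (k-1) ∧ cf.val ≤ u + (k-1)) := by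
      have := cNA_mem' k hk1 u cf.val hu cf.isLt
      simpa [U] using this
    have e2 : cf ∈ cN (graphA k) Vv ↔ (v ≤ cf.val + (k-1) ∧ cf.val ≤ v + (k-1)) := by
      have := cNA_mem' k hk1 v cf.val hv cf.isLt
      simpa [Vv] using this
    rw [e1, e2] at hdiff
    exact hdiff
  · -- layer 1 witness
    refine ⟨cf.val, cf.isLt, Or.inr ⟨by simpa using hwC, ?_⟩⟩
    have hU : ((cf, (1:Fin 2)) ∈ cN (prism (graphA k)) (U,0)) ↔ cf = U := by
      rw [cNP_mem]; simp
    have hV : ((cf, (1:Fin 2)) ∈ cN (prism (graphA k)) (Vv,0)) ↔ cf = Vv := by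
      rw [cNP_mem]; simp
    rw [hU, hV] at hdiff
    rcases hdiff with ⟨h1, _⟩ | ⟨h1, _⟩
    · exact Or.inl (by simpa [U, Fin.ext_iff] using h1)
    · exact Or.inr (by simpa [Vv, Fin.ext_iff] using h1)



lemma filt_succ (f : ℕ → Prop) [DecidablePred f] (N : ℕ) :
    ((Finset.range (N+1)).filter f).card =
      ((Finset.range N).filter f).card + if f N then 1 else 0 := by
  rw [Finset.range_add_one, Finset.filter_insert]
  split
  · rw [Finset.card_insert_of_notMem (by simp)]
  · simp

lemma run_count (f : ℕ → Prop) [DecidablePred f] (t : ℕ) :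
    ∀ n, t ≤ n → (∀ j, t ≤ j → j < n → f j) →
    ((Finset.range n).filter f).card = ((Finset.range t).filter f).card + (n - t) := by
  intro n
  induction n with
  | zero => intro h _; interval_cases t; simp
  | succ N IHn =>
    intro ht hall
    rcases Nat.lt_or_ge N t with h | h
    · have : t = N+1 := by omega
      subst this; simp
    · rw [filt_succ, if_pos (hall N h (by omega)), IHn h (fun j hj hjn => hall j hj (by omega))]
      omega

lemma core (f g : ℕ → Prop) [DecidablePred f] [DecidablePred g] :
    ∀ n : ℕ, ∀ S : Finset ℕ, (∀ x ∈ S, x ≤ n) →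
    (∀ p ∈ S, ∀ q ∈ S, p < q → (∀ m, p ≤ m → m < q → f m) → g p ∨ g q) →
    ((Finset.range n).filter f).card + S.card ≤ (S.filter g).card + (n + 1) := by
  intro n
  induction n using Nat.strong_induction_on with
  | _ n IH =>
  match n with
  | 0 =>
    intro S hS _
    have hsub : S ⊆ {0} := fun x hx => by simpa using Nat.le_zero.mp (hS x hx)
    have := Finset.card_le_card hsub
    simp only [Finset.card_singleton] at this
    simp only [Finset.range_zero, Finset.filter_empty, Finset.card_empty, zero_add]
    omega
  | (N+1) =>
    intro S hS hH
    by_cases hfN : f N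
    · by_cases hNS : (N+1) ∈ S
      · by_cases hgN : g (N+1)
        · -- erase case
          set S1 := S.erase (N+1) with hS1
          have h1 := IH N (by omega) S1
            (fun x hx => by
              have := hS x (Finset.mem_of_mem_erase hx)
              have := Finset.ne_of_mem_erase hx
              omega)
            (fun p hp q hq hpq hm => hH p (Finset.mem_of_mem_erase hp) q (Finset.mem_of_mem_erase hq) hpq hm)
          have h2 := filt_succ f N
          rw [if_pos hfN] at h2
          have h3 : S1.card + 1 = S.card := Finset.card_erase_add_one hNS
          have h4 : S1.filter g = (S.filter g).erase (N+1) := by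
            ext x; simp only [hS1, Finset.mem_filter, Finset.mem_erase]; tauto
          have h5 : ((S.filter g).erase (N+1)).card + 1 = (S.filter g).card :=
            Finset.card_erase_add_one (Finset.mem_filter.mpr ⟨hNS, hgN⟩)
          rw [h4] at h1
          omega
        · -- hard case: find t
          by_cases hex : ∃ j, j ≤ N ∧ ¬ f j
          · obtain ⟨j0, hj0N, hj0⟩ := hex
            set T := Nat.findGreatest (fun j => ¬ f j) N with hT
            have hPT : ¬ f T := by
              have := Nat.findGreatest_spec (P := fun j => ¬ f j) hj0N hj0
              simpa [hT] using this
            have hTN : T ≤ N := Nat.findGreatest_le N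
            have hTN' : T < N := lt_of_le_of_ne hTN (fun h => hPT (h ▸ hfN))
            have hrun : ∀ j, T + 1 ≤ j → j ≤ N → f j := fun j h1 h2 => by
              by_contra hc
              have := Nat.findGreatest_is_greatest (P := fun j => ¬ f j) (n := N)
                (show Nat.findGreatest (fun j => ¬ f j) N < j by omega) h2
              exact this hc
            -- forced g
            have hforced : ∀ x ∈ S, T + 1 ≤ x → x ≤ N → g x := by
              intro x hx h1 h2
              rcases hH x hx (N+1) hNS (by omega)
                (fun m hm1 hm2 => hrun m (by omega) (by omega)) with h | h
              · exact h
              · exact absurd h hgN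
            set S1 := S.filter (· ≤ T) with hS1def
            set S2 := S.filter (fun x => ¬ x ≤ T) with hS2def
            have hsplit : S1.card + S2.card = S.card :=
              Finset.card_filter_add_card_filter_not _
            have h1 := IH T (by omega) S1
              (fun x hx => (Finset.mem_filter.mp hx).2)
              (fun p hp q hq hpq hm =>
                hH p (Finset.mem_filter.mp hp).1 q (Finset.mem_filter.mp hq).1 hpq hm)
            -- count of f over range (N+1)
            have hcnt : ((Finset.range (N+1)).filter f).card
                = ((Finset.range T).filter f).card + (N + 1 - (T+1)) := by
              rw [run_count f (T+1) (N+1) (by omega) (fun j hj hjn => hrun j hj (by omega))]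
              rw [filt_succ, if_neg hPT]
              omega
            -- S2 filter g card ≥ S2.card - 1
            have hs2 : S2.card ≤ (S2.filter g).card + 1 := by
              have hsub2 : S2 ⊆ (S2.filter g) ∪ {N+1} := by
                intro x hx
                obtain ⟨hxS, hxT⟩ := Finset.mem_filter.mp hx
                rcases Nat.lt_or_ge x (N+1) with h | h
                · exact Finset.mem_union_left _
                    (Finset.mem_filter.mpr ⟨hx, hforced x hxS (by omega) (by omega)⟩)
                · have : x = N+1 := by have := hS x hxS; omega
                  exact Finset.mem_union_right _ (by simp [this])
              calc S2.card ≤ ((S2.filter g) ∪ {N+1}).card := Finset.card_le_card hsub2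
                _ ≤ (S2.filter g).card + 1 := by
                    have := Finset.card_union_le (S2.filter g) ({N+1} : Finset ℕ)
                    simpa using this
            -- combine filtered g counts
            have hgsplit : (S1.filter g).card + (S2.filter g).card = (S.filter g).card := by
              rw [hS1def, hS2def, Finset.filter_comm, Finset.filter_comm (fun x => ¬ x ≤ T)]
              exact Finset.card_filter_add_card_filter_not _
            omega
          · -- all f below: t = 0
            push_neg at hex
            have hcnt : ((Finset.range (N+1)).filter f).card = N + 1 := by
              have := run_count f 0 (N+1) (by omega)
                (fun j _ hj => by rcases Nat.lt_or_ge j N with h | h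
                                  · exact hex j (by omega)
                                  · have : j = N := by omega
                                    exact this ▸ hfN)
              simpa using this
            have hforced : ∀ x ∈ S, x ≤ N → g x := by
              intro x hx h2
              rcases hH x hx (N+1) hNS (by omega)
                (fun m hm1 hm2 => by
                  rcases Nat.lt_or_ge m N with h | h
                  · exact hex m (by omega)
                  · have : m = N := by omega
                    exact this ▸ hfN) with h | h
              · exact h
              · exact absurd h hgN
            have hs2 : S.card ≤ (S.filter g).card + 1 := by
              have hsub2 : S ⊆ (S.filter g) ∪ {N+1} := by
                intro x hx
                rcases Nat.lt_or_ge x (N+1) with h | h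
                · exact Finset.mem_union_left _
                    (Finset.mem_filter.mpr ⟨hx, hforced x hx (by omega)⟩)
                · have : x = N+1 := by have := hS x hx; omega
                  exact Finset.mem_union_right _ (by simp [this])
              calc S.card ≤ ((S.filter g) ∪ {N+1}).card := Finset.card_le_card hsub2
                _ ≤ (S.filter g).card + 1 := by
                    have := Finset.card_union_le (S.filter g) ({N+1} : Finset ℕ)
                    simpa using this
            omega
      · -- N+1 ∉ S
        have h1 := IH N (by omega) S
          (fun x hx => by have h := hS x hx
                          rcases Nat.lt_or_ge x (N+1) with h' | h'
                          · omega
                          · exact absurd (by omega : x = N+1) (fun e => hNS (e ▸ hx)))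
          hH
        have h2 := filt_succ f N
        rw [if_pos hfN] at h2
        omega
    · -- ¬ f N
      set S1 := S.filter (· ≤ N) with hS1def
      have h1 := IH N (by omega) S1
        (fun x hx => (Finset.mem_filter.mp hx).2)
        (fun p hp q hq hpq hm =>
          hH p (Finset.mem_filter.mp hp).1 q (Finset.mem_filter.mp hq).1 hpq hm)
      have h2 := filt_succ f N
      rw [if_neg hfN] at h2
      have h3 : S.card ≤ S1.card + 1 := by
        have hsub : S ⊆ S1 ∪ {N+1} := by
          intro x hx
          rcases Nat.lt_or_ge x (N+1) with h | h
          · exact Finset.mem_union_left _ (Finset.mem_filter.mpr ⟨hx, by omega⟩)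
          · have : x = N+1 := by have := hS x hx; omega
            exact Finset.mem_union_right _ (by simp [this])
        calc S.card ≤ (S1 ∪ {N+1}).card := Finset.card_le_card hsub
          _ ≤ S1.card + 1 := by
              have := Finset.card_union_le S1 ({N+1} : Finset ℕ)
              simpa using this
      have h4 : (S1.filter g).card ≤ (S.filter g).card :=
        Finset.card_le_card (Finset.filter_subset_filter g (Finset.filter_subset _ _))
      omega

lemma prism_lower (k : ℕ) (hk : 3 ≤ k) (C : Set (Fin (2*k) × Fin 2))
    (hC : IsIDCode (prism (graphA k)) C) : 2*k - 1 ≤ C.ncard := by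
  classical
  let aP : ℕ → Prop := fun m => ∃ h : m < 2*k, ((⟨m,h⟩ : Fin (2*k)), (0:Fin 2)) ∈ C
  let bP : ℕ → Prop := fun m => ∃ h : m < 2*k, ((⟨m,h⟩ : Fin (2*k)), (1:Fin 2)) ∈ C
  let f : ℕ → Prop := fun m => ¬ aP (if m < k then m + k else m - k)
  let g : ℕ → Prop := fun j => bP (if j < k then j else j - 1)
  let S : Finset ℕ := (Finset.range (2*k+1)).erase k
  have hSmem : ∀ x, x ∈ S ↔ (x ≤ 2*k ∧ x ≠ k) := by
    intro x
    simp only [S, Finset.mem_erase, Finset.mem_range]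
    omega
  have hH : ∀ p ∈ S, ∀ q ∈ S, p < q → (∀ m, p ≤ m → m < q → f m) → g p ∨ g q := by
    intro p hp q hq hpq hm
    obtain ⟨hp2k, hpk⟩ := (hSmem p).mp hp
    obtain ⟨hq2k, hqk⟩ := (hSmem q).mp hq
    -- define the global pair
    set u : ℕ := if p < k then p else p - 1 with hu_def
    set v : ℕ := if q < k then q else q - 1 with hv_def
    have hu : u < 2*k := by rw [hu_def]; split <;> omega
    have hv : v < 2*k := by rw [hv_def]; split <;> omega
    have huv : u ≠ v := by rw [hu_def, hv_def]; split <;> split <;> omega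
    obtain ⟨c, hc, hcase⟩ := sep_witness k hk C hC.2 u v hu hv huv
    rcases hcase with ⟨hacmem, hxor⟩ | ⟨hbcmem, hcuv⟩
    · exfalso
      have hac : aP c := ⟨hc, hacmem⟩
      have hgetm : ∃ m, p ≤ m ∧ m < q ∧ (if m < k then m + k else m - k) = c := by
        rcases hxor with ⟨⟨h1,h2⟩,h3⟩ | ⟨⟨h1,h2⟩,h3⟩ <;>
          rcases not_and_or.mp h3 with h3 | h3 <;> push_neg at h3 <;>
          [skip; skip; skip; skip] <;>
          (rcases lt_or_ge c k with hck | hck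
           · refine ⟨c + k, ?_, ?_, ?_⟩
             · rw [hu_def, hv_def] at *; split_ifs at * <;> omega
             · rw [hu_def, hv_def] at *; split_ifs at * <;> omega
             · rw [if_neg (by omega)]; omega
           · refine ⟨c - k, ?_, ?_, ?_⟩
             · rw [hu_def, hv_def] at *; split_ifs at * <;> omega
             · rw [hu_def, hv_def] at *; split_ifs at * <;> omega
             · rw [if_pos (by omega)]; omega)
      obtain ⟨m, hm1, hm2, hm3⟩ := hgetm
      exact hm m hm1 hm2 (hm3 ▸ hac)
    · -- layer 1 witness: conclude g p ∨ g q
      have hbc : bP c := ⟨hc, hbcmem⟩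
      rcases hcuv with rfl | rfl
      · exact Or.inl hbc
      · exact Or.inr hbc
  -- counting
  have hSbound : ∀ x ∈ S, x ≤ 2*k := fun x hx => ((hSmem x).mp hx).1
  have hcore := core f g (2*k) S hSbound hH
  have hScard : S.card = 2*k := by
    have : k ∈ Finset.range (2*k+1) := Finset.mem_range.mpr (by omega)
    rw [show S = (Finset.range (2*k+1)).erase k from rfl,
      Finset.card_erase_of_mem this, Finset.card_range]
    omega
  have invol : ∀ a : ℕ, a < 2*k →
      (if (if a < k then a + k else a - k) < k then (if a < k then a + k else a - k) + k
        else (if a < k then a + k else a - k) - k) = a := by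
    intro a ha; split_ifs <;> omega
  have hAcard : ((Finset.range (2*k)).filter f).card
      = ((Finset.range (2*k)).filter (fun m => ¬ aP m)).card := by
    apply Finset.card_bij' (i := fun m _ => if m < k then m + k else m - k)
      (j := fun m _ => if m < k then m + k else m - k)
    · intro a ha
      obtain ⟨ha1, ha2⟩ := Finset.mem_filter.mp ha
      rw [Finset.mem_range] at ha1
      exact Finset.mem_filter.mpr ⟨Finset.mem_range.mpr (by split_ifs <;> omega), ha2⟩
    · intro a ha
      obtain ⟨ha1, ha2⟩ := Finset.mem_filter.mp ha
      rw [Finset.mem_range] at ha1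
      refine Finset.mem_filter.mpr ⟨Finset.mem_range.mpr (by split_ifs <;> omega), ?_⟩
      show ¬ aP _
      rw [invol a ha1]
      exact ha2
    · intro a ha
      obtain ⟨ha1, _⟩ := Finset.mem_filter.mp ha
      exact invol a (Finset.mem_range.mp ha1)
    · intro a ha
      obtain ⟨ha1, _⟩ := Finset.mem_filter.mp ha
      exact invol a (Finset.mem_range.mp ha1)
  have hAsplit : ((Finset.range (2*k)).filter aP).card
      + ((Finset.range (2*k)).filter (fun m => ¬ aP m)).card = 2*k := by
    rw [Finset.card_filter_add_card_filter_not (p := aP), Finset.card_range]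
  have hBcard : (S.filter g).card = ((Finset.range (2*k)).filter bP).card := by
    apply Finset.card_bij' (i := fun j _ => if j < k then j else j - 1)
      (j := fun m _ => if m < k then m else m + 1)
    · intro a ha
      obtain ⟨ha1, ha2⟩ := Finset.mem_filter.mp ha
      obtain ⟨hak, hane⟩ := (hSmem a).mp ha1
      exact Finset.mem_filter.mpr ⟨Finset.mem_range.mpr (by split_ifs <;> omega), ha2⟩
    · intro a ha
      obtain ⟨ha1, ha2⟩ := Finset.mem_filter.mp ha
      rw [Finset.mem_range] at ha1
      refine Finset.mem_filter.mpr ⟨(hSmem _).mpr (by split_ifs <;> omega), ?_⟩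
      show bP _
      have e : (if (if a < k then a else a + 1) < k then (if a < k then a else a + 1)
          else (if a < k then a else a + 1) - 1) = a := by split_ifs <;> omega
      rw [e]; exact ha2
    · intro a ha
      obtain ⟨ha1, _⟩ := Finset.mem_filter.mp ha
      obtain ⟨hak, hane⟩ := (hSmem a).mp ha1
      split_ifs <;> omega
    · intro a ha
      obtain ⟨ha1, _⟩ := Finset.mem_filter.mp ha
      have := Finset.mem_range.mp ha1
      split_ifs <;> omega
  -- C.ncard = cardA + cardB
  have hCfin : C.Finite := Set.toFinite C
  have hCn : C.ncard = hCfin.toFinset.card := Set.ncard_eq_toFinset_card C hCfin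
  set CF : Finset (Fin (2*k) × Fin 2) := hCfin.toFinset with hCFdef
  have hCFmem : ∀ p : Fin (2*k) × Fin 2, p ∈ CF ↔ p ∈ C := fun p => Set.Finite.mem_toFinset _
  have hCFsplit : (CF.filter (fun p => p.2 = 0)).card + (CF.filter (fun p => ¬ p.2 = 0)).card
      = CF.card := Finset.card_filter_add_card_filter_not _
  have hlay1 : CF.filter (fun p => ¬ p.2 = 0) = CF.filter (fun p => p.2 = 1) := by
    apply Finset.filter_congr
    intro p _
    constructor
    · intro h; omega
    · intro h h0; omega
  have hC0 : (CF.filter (fun p => p.2 = 0)).card = ((Finset.range (2*k)).filter aP).card := by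
    have himg : (Finset.univ.filter (fun i : Fin (2*k) => (i,(0:Fin 2)) ∈ C)).image
        (fun i : Fin (2*k) => (i:ℕ)) = (Finset.range (2*k)).filter aP := by
      ext m
      simp only [Finset.mem_image, Finset.mem_filter, Finset.mem_univ, true_and,
        Finset.mem_range]
      constructor
      · rintro ⟨i, hi, rfl⟩
        exact ⟨i.isLt, ⟨i.isLt, by rw [Fin.eta]; exact hi⟩⟩
      · rintro ⟨hm, ⟨h', hmem⟩⟩
        exact ⟨⟨m, h'⟩, hmem, rfl⟩
    have hcard2 : (CF.filter (fun p => p.2 = 0)).card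
        = (Finset.univ.filter (fun i : Fin (2*k) => (i,(0:Fin 2)) ∈ C)).card := by
      apply Finset.card_bij' (i := fun (p : Fin (2*k) × Fin 2) (_ : p ∈ CF.filter (fun p => p.2 = 0)) => p.1)
        (j := fun (i : Fin (2*k)) (_ : i ∈ Finset.univ.filter (fun i : Fin (2*k) => (i,(0:Fin 2)) ∈ C)) => (i, (0:Fin 2)))
      · intro p hp
        obtain ⟨hp1, hp2⟩ := Finset.mem_filter.mp hp
        refine Finset.mem_filter.mpr ⟨Finset.mem_univ _, ?_⟩
        have e : (p.1, (0:Fin 2)) = p := Prod.ext rfl hp2.symm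
        rw [e]
        exact (hCFmem p).mp hp1
      · intro i hi
        obtain ⟨_, hi2⟩ := Finset.mem_filter.mp hi
        exact Finset.mem_filter.mpr ⟨(hCFmem _).mpr hi2, rfl⟩
      · intro p hp
        obtain ⟨_, hp2⟩ := Finset.mem_filter.mp hp
        exact Prod.ext rfl hp2.symm
      · intro i _
        rfl
    rw [hcard2, ← himg, Finset.card_image_of_injective _ Fin.val_injective]
  have hC1 : (CF.filter (fun p => p.2 = 1)).card = ((Finset.range (2*k)).filter bP).card := by
    have himg : (Finset.univ.filter (fun i : Fin (2*k) => (i,(1:Fin 2)) ∈ C)).image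
        (fun i : Fin (2*k) => (i:ℕ)) = (Finset.range (2*k)).filter bP := by
      ext m
      simp only [Finset.mem_image, Finset.mem_filter, Finset.mem_univ, true_and,
        Finset.mem_range]
      constructor
      · rintro ⟨i, hi, rfl⟩
        exact ⟨i.isLt, ⟨i.isLt, by rw [Fin.eta]; exact hi⟩⟩
      · rintro ⟨hm, ⟨h', hmem⟩⟩
        exact ⟨⟨m, h'⟩, hmem, rfl⟩
    have hcard2 : (CF.filter (fun p => p.2 = 1)).card
        = (Finset.univ.filter (fun i : Fin (2*k) => (i,(1:Fin 2)) ∈ C)).card := by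
      apply Finset.card_bij' (i := fun (p : Fin (2*k) × Fin 2) (_ : p ∈ CF.filter (fun p => p.2 = 1)) => p.1)
        (j := fun (i : Fin (2*k)) (_ : i ∈ Finset.univ.filter (fun i : Fin (2*k) => (i,(1:Fin 2)) ∈ C)) => (i, (1:Fin 2)))
      · intro p hp
        obtain ⟨hp1, hp2⟩ := Finset.mem_filter.mp hp
        refine Finset.mem_filter.mpr ⟨Finset.mem_univ _, ?_⟩
        have e : (p.1, (1:Fin 2)) = p := Prod.ext rfl hp2.symm
        rw [e]
        exact (hCFmem p).mp hp1
      · intro i hi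
        obtain ⟨_, hi2⟩ := Finset.mem_filter.mp hi
        exact Finset.mem_filter.mpr ⟨(hCFmem _).mpr hi2, rfl⟩
      · intro p hp
        obtain ⟨_, hp2⟩ := Finset.mem_filter.mp hp
        exact Prod.ext rfl hp2.symm
      · intro i _
        rfl
    rw [hcard2, ← himg, Finset.card_image_of_injective _ Fin.val_injective]
  rw [hlay1] at hCFsplit
  omega



lemma sep_of_witness {X : Type} {G : SimpleGraph X} {C : Set X} {u v w : X}
    (hwC : w ∈ C) (h1 : w ∈ cN G u) (h2 : w ∉ cN G v) : cN G u ∩ C ≠ cN G v ∩ C :=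
  fun he => h2 ((Set.ext_iff.mp he w).mp ⟨h1, hwC⟩).1

lemma cNPA_same (k : ℕ) (hk1 : 1 ≤ k) (u c : ℕ) (hu : u < 2*k) (hc : c < 2*k) (t : Fin 2) :
    (((⟨c,hc⟩ : Fin (2*k)), t) ∈ cN (prism (graphA k)) (⟨u,hu⟩, t)) ↔
      (u ≤ c + (k-1) ∧ c ≤ u + (k-1)) := by
  rw [cNP_mem]
  simp [cNA_mem' k hk1 u c hu hc]

lemma cNPA_cross (k : ℕ) (u c : ℕ) (hu : u < 2*k) (hc : c < 2*k) (t s : Fin 2) (hts : s ≠ t) :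
    (((⟨c,hc⟩ : Fin (2*k)), s) ∈ cN (prism (graphA k)) (⟨u,hu⟩, t)) ↔ c = u := by
  rw [cNP_mem]
  simp [hts, Fin.ext_iff]

lemma codeA_dom (k : ℕ) (hk : 3 ≤ k) : IsDomSet (prism (graphA k)) (codeA k) := by
  have hk1 : 1 ≤ k := by omega
  rintro ⟨iF, t⟩
  fin_cases t
  · rcases Nat.lt_or_ge (iF : ℕ) (k-1) with h | h
    · refine ⟨(iF, 0), Set.mem_insert _ _, Or.inl ⟨rfl, ?_⟩⟩
      show (iF:ℕ) + 1 ≤ k - 1 ∨ (k + 1 ≤ (iF:ℕ) + 1 ∧ (iF:ℕ) + 1 ≤ 2*k - 2)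
      omega
    · refine ⟨((⟨k, by omega⟩ : Fin (2*k)), 0), ?_, Or.inl ⟨rfl, by simp; omega⟩⟩
      have := (cNPA_same k hk1 iF.val k iF.isLt (by omega) 0).mpr (by have := iF.isLt; omega)
      rwa [Fin.eta] at this
  · by_cases h : (iF:ℕ) = k-1 ∨ (iF:ℕ) = 2*k-1
    · refine ⟨(iF, 1), Set.mem_insert _ _, Or.inr ⟨rfl, ?_⟩⟩
      show (iF:ℕ) + 1 = k ∨ (iF:ℕ) + 1 = 2*k
      omega
    · push_neg at h
      refine ⟨((⟨k-1, by omega⟩ : Fin (2*k)), 1), ?_, Or.inr ⟨rfl, by simp; omega⟩⟩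
      have := (cNPA_same k hk1 iF.val (k-1) iF.isLt (by omega) 1).mpr
        (by have := iF.isLt; omega)
      rwa [Fin.eta] at this

lemma sub00 (k : ℕ) (hk : 3 ≤ k) : ∀ a b (ha : a < 2*k) (hb : b < 2*k), a < b →
    cN (prism (graphA k)) (⟨a,ha⟩, 0) ∩ codeA k ≠
      cN (prism (graphA k)) (⟨b,hb⟩, 0) ∩ codeA k := by
  intro a b ha hb hab
  have hk1 : 1 ≤ k := by omega
  by_cases hAc1 : a = k-1 ∨ a = 2*k-1
  · refine sep_of_witness (w := ((⟨a,ha⟩ : Fin (2*k)), (1:Fin 2))) (Or.inr ⟨rfl, by simp; omega⟩)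
      ((cNPA_cross k a a ha ha 0 1 (by decide)).mpr rfl) ?_
    rw [cNPA_cross k b a hb ha 0 1 (by decide)]
    omega
  · by_cases hBc1 : b = k-1 ∨ b = 2*k-1
    · refine (sep_of_witness (w := ((⟨b,hb⟩ : Fin (2*k)), (1:Fin 2))) (Or.inr ⟨rfl, by simp; omega⟩)
        ((cNPA_cross k b b hb hb 0 1 (by decide)).mpr rfl) ?_).symm
      rw [cNPA_cross k a b ha hb 0 1 (by decide)]
      omega
    · push_neg at hAc1 hBc1
      obtain ⟨ha1, ha2⟩ := hAc1
      obtain ⟨hb1, hb2⟩ := hBc1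
      rcases Nat.lt_or_ge b k with hbk | hbk
      · refine (sep_of_witness (w := ((⟨a+k, by omega⟩ : Fin (2*k)), (0:Fin 2)))
          (Or.inl ⟨rfl, by simp; omega⟩)
          ((cNPA_same k hk1 b (a+k) hb (by omega) 0).mpr (by omega)) ?_).symm
        rw [cNPA_same k hk1 a (a+k) ha (by omega) 0]
        omega
      · rcases Nat.lt_or_ge a k with hak | hak
        · refine sep_of_witness (w := ((⟨0, by omega⟩ : Fin (2*k)), (0:Fin 2)))
            (Or.inl ⟨rfl, by simp; omega⟩)
            ((cNPA_same k hk1 a 0 ha (by omega) 0).mpr (by omega)) ?_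
          rw [cNPA_same k hk1 b 0 hb (by omega) 0]
          omega
        · refine sep_of_witness (w := ((⟨a-k+1, by omega⟩ : Fin (2*k)), (0:Fin 2)))
            (Or.inl ⟨rfl, by simp; omega⟩)
            ((cNPA_same k hk1 a (a-k+1) ha (by omega) 0).mpr (by omega)) ?_
          rw [cNPA_same k hk1 b (a-k+1) hb (by omega) 0]
          omega

lemma sub11 (k : ℕ) (hk : 3 ≤ k) : ∀ a b (ha : a < 2*k) (hb : b < 2*k), a < b →
    cN (prism (graphA k)) (⟨a,ha⟩, 1) ∩ codeA k ≠
      cN (prism (graphA k)) (⟨b,hb⟩, 1) ∩ codeA k := by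
  intro a b ha hb hab
  have hk1 : 1 ≤ k := by omega
  by_cases hA : a + 1 ≤ 2*k-2 ∧ a ≠ k-1
  · refine sep_of_witness (w := ((⟨a,ha⟩ : Fin (2*k)), (0:Fin 2))) (Or.inl ⟨rfl, by simp; omega⟩)
      ((cNPA_cross k a a ha ha 1 0 (by decide)).mpr rfl) ?_
    rw [cNPA_cross k b a hb ha 1 0 (by decide)]
    omega
  · by_cases hB : b + 1 ≤ 2*k-2 ∧ b ≠ k-1
    · refine (sep_of_witness (w := ((⟨b,hb⟩ : Fin (2*k)), (0:Fin 2))) (Or.inl ⟨rfl, by simp; omega⟩)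
        ((cNPA_cross k b b hb hb 1 0 (by decide)).mpr rfl) ?_).symm
      rw [cNPA_cross k a b ha hb 1 0 (by decide)]
      omega
    · have ha' : a = k-1 ∨ a = 2*k-2 ∨ a = 2*k-1 := by
        rcases Nat.lt_or_ge a (2*k-2) with h | h
        · left
          by_contra hc
          exact hA ⟨by omega, hc⟩
        · omega
      have hb' : b = k-1 ∨ b = 2*k-2 ∨ b = 2*k-1 := by
        rcases Nat.lt_or_ge b (2*k-2) with h | h
        · left
          by_contra hc
          exact hB ⟨by omega, hc⟩
        · omega
      rcases ha' with ha' | ha' | ha'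
      · -- a = k-1, b ∈ {2k-2, 2k-1} : witness (2k-1, 1) on side b
        refine (sep_of_witness (w := ((⟨2*k-1, by omega⟩ : Fin (2*k)), (1:Fin 2)))
          (Or.inr ⟨rfl, by simp; omega⟩)
          ((cNPA_same k hk1 b (2*k-1) hb (by omega) 1).mpr (by omega)) ?_).symm
        rw [cNPA_same k hk1 a (2*k-1) ha (by omega) 1]
        omega
      · -- a = 2k-2, b = 2k-1 : witness (k-1,1) on side a
        refine sep_of_witness (w := ((⟨k-1, by omega⟩ : Fin (2*k)), (1:Fin 2)))
          (Or.inr ⟨rfl, by simp; omega⟩)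
          ((cNPA_same k hk1 a (k-1) ha (by omega) 1).mpr (by omega)) ?_
        rw [cNPA_same k hk1 b (k-1) hb (by omega) 1]
        omega
      · omega

lemma sub01 (k : ℕ) (hk : 3 ≤ k) : ∀ a b (ha : a < 2*k) (hb : b < 2*k),
    cN (prism (graphA k)) (⟨a,ha⟩, 0) ∩ codeA k ≠
      cN (prism (graphA k)) (⟨b,hb⟩, 1) ∩ codeA k := by
  intro a b ha hb
  have hk1 : 1 ≤ k := by omega
  by_cases hA : a = k-1
  · by_cases hb0 : b = 1
    · refine sep_of_witness (w := ((⟨0, by omega⟩ : Fin (2*k)), (0:Fin 2)))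
        (Or.inl ⟨rfl, by simp; omega⟩)
        ((cNPA_same k hk1 a 0 ha (by omega) 0).mpr (by omega)) ?_
      rw [cNPA_cross k b 0 hb (by omega) 1 0 (by decide)]
      omega
    · refine sep_of_witness (w := ((⟨1, by omega⟩ : Fin (2*k)), (0:Fin 2)))
        (Or.inl ⟨rfl, by simp; omega⟩)
        ((cNPA_same k hk1 a 1 ha (by omega) 0).mpr (by omega)) ?_
      rw [cNPA_cross k b 1 hb (by omega) 1 0 (by decide)]
      omega
  · by_cases hA2 : a = 2*k-1
    · rcases Nat.lt_or_ge b k with hbk | hbk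
      · refine sep_of_witness (w := ((⟨2*k-1, by omega⟩ : Fin (2*k)), (1:Fin 2)))
          (Or.inr ⟨rfl, by simp; omega⟩)
          ((cNPA_cross k a (2*k-1) ha (by omega) 0 1 (by decide)).mpr (by omega)) ?_
        rw [cNPA_same k hk1 b (2*k-1) hb (by omega) 1]
        omega
      · rcases Nat.lt_or_ge b (2*k-1) with hb2 | hb2
        · refine (sep_of_witness (w := ((⟨k-1, by omega⟩ : Fin (2*k)), (1:Fin 2)))
            (Or.inr ⟨rfl, by simp; omega⟩)
            ((cNPA_same k hk1 b (k-1) hb (by omega) 1).mpr (by omega)) ?_).symm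
          rw [cNPA_cross k a (k-1) ha (by omega) 0 1 (by decide)]
          omega
        · refine sep_of_witness (w := ((⟨k, by omega⟩ : Fin (2*k)), (0:Fin 2)))
            (Or.inl ⟨rfl, by simp; omega⟩)
            ((cNPA_same k hk1 a k ha (by omega) 0).mpr (by omega)) ?_
          rw [cNPA_cross k b k hb (by omega) 1 0 (by decide)]
          omega
    · rcases Nat.lt_or_ge b (2*k-1) with hb2 | hb2
      · refine (sep_of_witness (w := ((⟨k-1, by omega⟩ : Fin (2*k)), (1:Fin 2)))
          (Or.inr ⟨rfl, by simp; omega⟩)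
          ((cNPA_same k hk1 b (k-1) hb (by omega) 1).mpr (by omega)) ?_).symm
        rw [cNPA_cross k a (k-1) ha (by omega) 0 1 (by decide)]
        omega
      · refine (sep_of_witness (w := ((⟨2*k-1, by omega⟩ : Fin (2*k)), (1:Fin 2)))
          (Or.inr ⟨rfl, by simp; omega⟩)
          ((cNPA_same k hk1 b (2*k-1) hb (by omega) 1).mpr (by omega)) ?_).symm
        rw [cNPA_cross k a (2*k-1) ha (by omega) 0 1 (by decide)]
        omega

lemma codeA_sep (k : ℕ) (hk : 3 ≤ k) :
    ∀ u v : Fin (2*k) × Fin 2, u ≠ v →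
      cN (prism (graphA k)) u ∩ codeA k ≠ cN (prism (graphA k)) v ∩ codeA k := by
  rintro ⟨iF, t⟩ ⟨jF, s⟩ huv
  fin_cases t <;> fin_cases s
  · have hij : (iF:ℕ) ≠ (jF:ℕ) := fun h => huv (by simp [Prod.ext_iff, Fin.ext_iff, h])
    rcases Nat.lt_or_ge (iF:ℕ) (jF:ℕ) with h | h
    · have := sub00 k hk iF.val jF.val iF.isLt jF.isLt h
      simpa [Fin.eta] using this
    · have := (sub00 k hk jF.val iF.val jF.isLt iF.isLt (by omega)).symm
      simpa [Fin.eta] using this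
  · have := sub01 k hk iF.val jF.val iF.isLt jF.isLt
    simpa [Fin.eta] using this
  · have := (sub01 k hk jF.val iF.val jF.isLt iF.isLt).symm
    simpa [Fin.eta] using this
  · have hij : (iF:ℕ) ≠ (jF:ℕ) := fun h => huv (by simp [Prod.ext_iff, Fin.ext_iff, h])
    rcases Nat.lt_or_ge (iF:ℕ) (jF:ℕ) with h | h
    · have := sub11 k hk iF.val jF.val iF.isLt jF.isLt h
      simpa [Fin.eta] using this
    · have := (sub11 k hk jF.val iF.val jF.isLt iF.isLt (by omega)).symm
      simpa [Fin.eta] using this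

lemma ncard_layer_split {n : ℕ} (C : Set (Fin n × Fin 2)) :
    C.ncard = {i : Fin n | (i, 0) ∈ C}.ncard + {i : Fin n | (i, 1) ∈ C}.ncard := by
  have hdecomp : C = ((fun i => (i, (0:Fin 2))) '' {i : Fin n | (i, 0) ∈ C})
      ∪ ((fun i => (i, (1:Fin 2))) '' {i : Fin n | (i, 1) ∈ C}) := by
    ext ⟨i, t⟩
    simp only [Set.mem_union, Set.mem_image, Set.mem_setOf_eq, Prod.mk.injEq]
    constructor
    · intro h
      fin_cases t
      · exact Or.inl ⟨i, h, rfl, rfl⟩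
      · exact Or.inr ⟨i, h, rfl, rfl⟩
    · rintro (⟨j, hj, rfl, rfl⟩ | ⟨j, hj, rfl, rfl⟩) <;> exact hj
  conv_lhs => rw [hdecomp]
  rw [Set.ncard_union_eq ?_ ?_ ?_]
  · rw [Set.ncard_image_of_injective _ (fun x y h => (Prod.mk.injEq _ _ _ _ ▸ h : _ ∧ _).1),
      Set.ncard_image_of_injective _ (fun x y h => (Prod.mk.injEq _ _ _ _ ▸ h : _ ∧ _).1)]
  · rw [Set.disjoint_iff]
    rintro ⟨i, t⟩ ⟨⟨j, _, hj⟩, ⟨l, _, hl⟩⟩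
    rw [Prod.mk.injEq] at hj hl
    have : (0 : Fin 2) = 1 := hj.2.trans hl.2.symm
    exact absurd this (by decide)
  · exact Set.toFinite _
  · exact Set.toFinite _

lemma fin_filter_card {n : ℕ} (P : ℕ → Prop) [DecidablePred P] :
    (Finset.univ.filter (fun i : Fin n => P (i:ℕ))).card
      = ((Finset.range n).filter P).card := by
  have himg : (Finset.univ.filter (fun i : Fin n => P (i:ℕ))).image (fun i : Fin n => (i:ℕ))
      = (Finset.range n).filter P := by
    ext m
    simp only [Finset.mem_image, Finset.mem_filter, Finset.mem_univ, true_and, Finset.mem_range]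
    constructor
    · rintro ⟨i, hi, rfl⟩; exact ⟨i.isLt, hi⟩
    · rintro ⟨hm, hP⟩; exact ⟨⟨m, hm⟩, hP, rfl⟩
  rw [← himg, Finset.card_image_of_injective _ Fin.val_injective]

lemma set_ncard_fin {n : ℕ} (P : ℕ → Prop) [DecidablePred P] :
    {i : Fin n | P (i:ℕ)}.ncard = ((Finset.range n).filter P).card := by
  have : {i : Fin n | P (i:ℕ)} = ↑(Finset.univ.filter (fun i : Fin n => P (i:ℕ))) := by
    ext i; simp
  rw [this, Set.ncard_coe_finset, fin_filter_card]

lemma codeA_ncard (k : ℕ) (hk : 3 ≤ k) : (codeA k).ncard = 2*k - 1 := by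
  classical
  rw [ncard_layer_split]
  have h0 : {i : Fin (2*k) | (i, 0) ∈ codeA k}
      = {i : Fin (2*k) | (i:ℕ) + 1 ≤ k - 1 ∨ (k + 1 ≤ (i:ℕ) + 1 ∧ (i:ℕ) + 1 ≤ 2*k - 2)} := by
    ext i
    simp [codeA]
  have h1 : {i : Fin (2*k) | (i, 1) ∈ codeA k}
      = {i : Fin (2*k) | (i:ℕ) + 1 = k ∨ (i:ℕ) + 1 = 2*k} := by
    ext i
    simp [codeA]
  rw [h0, h1, set_ncard_fin (fun c => c + 1 ≤ k - 1 ∨ (k + 1 ≤ c + 1 ∧ c + 1 ≤ 2*k - 2)),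
    set_ncard_fin (fun c => c + 1 = k ∨ c + 1 = 2*k)]
  have e0 : (Finset.range (2*k)).filter
      (fun c => c + 1 ≤ k - 1 ∨ (k + 1 ≤ c + 1 ∧ c + 1 ≤ 2*k - 2))
      = Finset.range (k-1) ∪ Finset.Ico k (2*k-2) := by
    ext m
    simp only [Finset.mem_filter, Finset.mem_range, Finset.mem_union, Finset.mem_Ico]
    omega
  have e1 : (Finset.range (2*k)).filter (fun c => c + 1 = k ∨ c + 1 = 2*k)
      = {k-1, 2*k-1} := by
    ext m
    simp only [Finset.mem_filter, Finset.mem_range, Finset.mem_insert, Finset.mem_singleton]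
    omega
  rw [e0, e1]
  rw [Finset.card_union_of_disjoint (by
    rw [Finset.disjoint_left]
    intro m hm hm2
    rw [Finset.mem_range] at hm
    rw [Finset.mem_Ico] at hm2
    omega)]
  rw [Finset.card_range, Nat.card_Ico]
  rw [Finset.card_insert_of_notMem (by simp; omega), Finset.card_singleton]
  omega

/-- witness extraction for graphA separation -/
lemma sepA_witness (k : ℕ) (hk : 3 ≤ k) (C : Set (Fin (2*k)))
    (hsep : ∀ u v : Fin (2*k), u ≠ v → cN (graphA k) u ∩ C ≠ cN (graphA k) v ∩ C)
    (u v : ℕ) (hu : u < 2*k) (hv : v < 2*k) (huv : u ≠ v) :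
    ∃ c, ∃ hc : c < 2*k, (⟨c,hc⟩ : Fin (2*k)) ∈ C ∧
      (((u ≤ c + (k-1) ∧ c ≤ u + (k-1)) ∧ ¬(v ≤ c + (k-1) ∧ c ≤ v + (k-1))) ∨
       ((v ≤ c + (k-1) ∧ c ≤ v + (k-1)) ∧ ¬(u ≤ c + (k-1) ∧ c ≤ u + (k-1)))) := by
  have hk1 : 1 ≤ k := by omega
  have hne : (⟨u,hu⟩ : Fin (2*k)) ≠ ⟨v,hv⟩ := by simp [Fin.ext_iff]; omega
  obtain ⟨w, hw⟩ := ne_sets (hsep ⟨u,hu⟩ ⟨v,hv⟩ hne)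
  have key : w ∈ C ∧
      ((w ∈ cN (graphA k) ⟨u,hu⟩ ∧ w ∉ cN (graphA k) ⟨v,hv⟩) ∨
       (w ∈ cN (graphA k) ⟨v,hv⟩ ∧ w ∉ cN (graphA k) ⟨u,hu⟩)) := by
    rcases hw with ⟨⟨h1, h2⟩, h3⟩ | ⟨⟨h1, h2⟩, h3⟩
    · exact ⟨h2, Or.inl ⟨h1, fun hmem => h3 ⟨hmem, h2⟩⟩⟩
    · exact ⟨h2, Or.inr ⟨h1, fun hmem => h3 ⟨hmem, h2⟩⟩⟩
  obtain ⟨hwC, hdiff⟩ := key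
  refine ⟨w.val, w.isLt, by simpa using hwC, ?_⟩
  have e1 := cNA_mem' k hk1 u w.val hu w.isLt
  have e2 := cNA_mem' k hk1 v w.val hv w.isLt
  simp only [Fin.eta] at e1 e2
  rw [e1, e2] at hdiff
  exact hdiff

/-- lower bound for graphA -/
lemma graphA_lower (k : ℕ) (hk : 3 ≤ k) (C : Set (Fin (2*k)))
    (hC : IsIDCode (graphA k) C) : 2*k - 1 ≤ C.ncard := by
  classical
  -- middle vertices forced
  have hmid : ∀ m, 1 ≤ m → m ≤ 2*k-2 → ∀ hm : m < 2*k, (⟨m, hm⟩ : Fin (2*k)) ∈ C := by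
    intro m h1 h2 hm
    rcases Nat.lt_or_ge m k with hmk | hmk
    · -- pair (m+k-1, m+k)
      obtain ⟨c, hc, hcC, hxor⟩ := sepA_witness k hk C hC.2 (m+k-1) (m+k)
        (by omega) (by omega) (by omega)
      have : c = m := by
        rcases hxor with ⟨⟨a1,a2⟩,a3⟩ | ⟨⟨a1,a2⟩,a3⟩ <;>
          rcases not_and_or.mp a3 with a3 | a3 <;> push_neg at a3 <;> omega
      subst this
      exact hcC
    · -- pair (m-k, m-k+1)
      obtain ⟨c, hc, hcC, hxor⟩ := sepA_witness k hk C hC.2 (m-k) (m-k+1)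
        (by omega) (by omega) (by omega)
      have : c = m := by
        rcases hxor with ⟨⟨a1,a2⟩,a3⟩ | ⟨⟨a1,a2⟩,a3⟩ <;>
          rcases not_and_or.mp a3 with a3 | a3 <;> push_neg at a3 <;> omega
      subst this
      exact hcC
  -- a corner forced
  have hcorner : ∃ c, ∃ hc : c < 2*k, (⟨c,hc⟩ : Fin (2*k)) ∈ C ∧ (c = 0 ∨ c = 2*k-1) := by
    obtain ⟨c, hc, hcC, hxor⟩ := sepA_witness k hk C hC.2 (k-1) k (by omega) (by omega) (by omega)
    refine ⟨c, hc, hcC, ?_⟩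
    rcases hxor with ⟨⟨a1,a2⟩,a3⟩ | ⟨⟨a1,a2⟩,a3⟩ <;>
      rcases not_and_or.mp a3 with a3 | a3 <;> push_neg at a3 <;> omega
  obtain ⟨c0, hc0, hc0C, hc0or⟩ := hcorner
  -- count
  have hfin : C.Finite := Set.toFinite C
  have hCn : C.ncard = hfin.toFinset.card := Set.ncard_eq_toFinset_card C hfin
  set CF : Finset (Fin (2*k)) := hfin.toFinset with hCF
  have hsub : insert (⟨c0, hc0⟩ : Fin (2*k))
      (Finset.univ.filter (fun i : Fin (2*k) => 1 ≤ (i:ℕ) ∧ (i:ℕ) ≤ 2*k-2)) ⊆ CF := by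
    intro x hx
    rcases Finset.mem_insert.mp hx with rfl | hx
    · exact (Set.Finite.mem_toFinset _).mpr hc0C
    · obtain ⟨_, h1, h2⟩ := Finset.mem_filter.mp hx
      have := hmid x.val h1 h2 x.isLt
      rw [Fin.eta] at this
      exact (Set.Finite.mem_toFinset _).mpr this
  have hcard1 : (Finset.univ.filter (fun i : Fin (2*k) => 1 ≤ (i:ℕ) ∧ (i:ℕ) ≤ 2*k-2)).card
      = 2*k - 2 := by
    have himg : (Finset.univ.filter (fun i : Fin (2*k) => 1 ≤ (i:ℕ) ∧ (i:ℕ) ≤ 2*k-2)).image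
        (fun i : Fin (2*k) => (i:ℕ)) = Finset.Icc 1 (2*k-2) := by
      ext m
      simp only [Finset.mem_image, Finset.mem_filter, Finset.mem_univ, true_and, Finset.mem_Icc]
      constructor
      · rintro ⟨i, ⟨h1, h2⟩, rfl⟩; exact ⟨h1, h2⟩
      · rintro ⟨h1, h2⟩; exact ⟨⟨m, by omega⟩, ⟨h1, h2⟩, rfl⟩
    have := Finset.card_image_of_injective
      (Finset.univ.filter (fun i : Fin (2*k) => 1 ≤ (i:ℕ) ∧ (i:ℕ) ≤ 2*k-2)) Fin.val_injective
    rw [himg] at this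
    rw [← this, Nat.card_Icc]
    omega
  have hnotmem : (⟨c0, hc0⟩ : Fin (2*k)) ∉
      Finset.univ.filter (fun i : Fin (2*k) => 1 ≤ (i:ℕ) ∧ (i:ℕ) ≤ 2*k-2) := by
    simp only [Finset.mem_filter, Finset.mem_univ, true_and, not_and]
    intro h1
    omega
  have := Finset.card_le_card hsub
  rw [Finset.card_insert_of_notMem hnotmem, hcard1] at this
  omega

/-- upper code for graphA -/
lemma graphA_upper (k : ℕ) (hk : 3 ≤ k) :
    ∃ D : Set (Fin (2*k)), IsIDCode (graphA k) D ∧ D.ncard = 2*k - 1 := by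
  classical
  have hk1 : 1 ≤ k := by omega
  refine ⟨{i | (i:ℕ) < 2*k-1}, ⟨?_, ?_⟩, ?_⟩
  · -- dominating
    intro v
    rcases Nat.lt_or_ge (v:ℕ) (2*k-1) with h | h
    · exact ⟨v, Set.mem_insert _ _, h⟩
    · refine ⟨⟨k, by omega⟩, ?_, by simp; omega⟩
      have := (cNA_mem' k hk1 v.val k v.isLt (by omega)).mpr (by omega)
      rw [Fin.eta] at this
      exact this
  · -- separating
    intro u v huv
    have key : ∀ a b : ℕ, ∀ (ha : a < 2*k) (hb : b < 2*k), a < b →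
        cN (graphA k) ⟨a,ha⟩ ∩ {i : Fin (2*k) | (i:ℕ) < 2*k-1}
          ≠ cN (graphA k) ⟨b,hb⟩ ∩ {i : Fin (2*k) | (i:ℕ) < 2*k-1} := by
      intro a b ha hb hab
      rcases Nat.lt_or_ge b k with hbk | hbk
      · -- c = a + k : in N[b] not N[a]
        refine (sep_of_witness (w := (⟨a+k, by omega⟩ : Fin (2*k))) (by simp; omega)
          ((cNA_mem' k hk1 b (a+k) hb (by omega)).mpr (by omega)) ?_).symm
        rw [cNA_mem' k hk1 a (a+k) ha (by omega)]
        omega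
      · rcases Nat.lt_or_ge a k with hak | hak
        · -- c = 0 : in N[a] not N[b]
          refine sep_of_witness (w := (⟨0, by omega⟩ : Fin (2*k))) (by simp; omega)
            ((cNA_mem' k hk1 a 0 ha (by omega)).mpr (by omega)) ?_
          rw [cNA_mem' k hk1 b 0 hb (by omega)]
          omega
        · -- a ≥ k : c = a - k + 1 : in N[a] not N[b]
          refine sep_of_witness (w := (⟨a-k+1, by omega⟩ : Fin (2*k))) (by simp; omega)
            ((cNA_mem' k hk1 a (a-k+1) ha (by omega)).mpr (by omega)) ?_
          rw [cNA_mem' k hk1 b (a-k+1) hb (by omega)]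
          omega
    rcases Nat.lt_or_ge (u:ℕ) (v:ℕ) with h | h
    · have := key u.val v.val u.isLt v.isLt h
      simpa [Fin.eta] using this
    · have hlt : (v:ℕ) < (u:ℕ) := by
        rcases Nat.lt_or_ge (v:ℕ) (u:ℕ) with h' | h'
        · exact h'
        · exact absurd (Fin.ext (by omega)) huv
      have := (key v.val u.val v.isLt u.isLt hlt).symm
      simpa [Fin.eta] using this
  · -- ncard
    have : ({i : Fin (2*k) | (i:ℕ) < 2*k-1} : Set (Fin (2*k)))
        = ↑(Finset.univ.filter (fun i : Fin (2*k) => (i:ℕ) < 2*k-1)) := by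
      ext i; simp
    rw [this, Set.ncard_coe_finset]
    have himg : (Finset.univ.filter (fun i : Fin (2*k) => (i:ℕ) < 2*k-1)).image
        (fun i : Fin (2*k) => (i:ℕ)) = Finset.range (2*k-1) := by
      ext m
      simp only [Finset.mem_image, Finset.mem_filter, Finset.mem_univ, true_and,
        Finset.mem_range]
      constructor
      · rintro ⟨i, h1, rfl⟩; exact h1
      · rintro h1; exact ⟨⟨m, by omega⟩, h1, rfl⟩
    have := Finset.card_image_of_injective
      (Finset.univ.filter (fun i : Fin (2*k) => (i:ℕ) < 2*k-1)) Fin.val_injective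
    rw [himg, Finset.card_range] at this
    omega

end AuxProofs

/-- for k ≥ 3, γ^ID(A_k □ K₂) = γ^ID(A_k) = 2k - 1, and the explicit
set above is an ID code of A_k □ K₂ of size 2k - 1. -/
theorem stmt13 (k : ℕ) (hk : 3 ≤ k) :
    IsIDCode (prism (graphA k)) (codeA k) ∧ (codeA k).ncard = 2 * k - 1 ∧
      idNum (prism (graphA k)) = 2 * k - 1 ∧ idNum (graphA k) = 2 * k - 1 := by
  have hid : IsIDCode (prism (graphA k)) (codeA k) := ⟨codeA_dom k hk, codeA_sep k hk⟩
  have hcard := codeA_ncard k hk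
  refine ⟨hid, hcard, ?_, ?_⟩
  · unfold idNum
    apply le_antisymm
    · apply Nat.sInf_le
      show ∃ C, IsIDCode (prism (graphA k)) C ∧ C.ncard = 2*k-1
      exact ⟨codeA k, hid, hcard⟩
    · refine le_csInf ⟨2*k-1, ?_⟩ ?_
      · show ∃ C, IsIDCode (prism (graphA k)) C ∧ C.ncard = 2*k-1
        exact ⟨codeA k, hid, hcard⟩
      · rintro n ⟨C, hC, rfl⟩
        exact prism_lower k hk C hC
  · obtain ⟨D, hD, hDcard⟩ := graphA_upper k hk
    unfold idNum
    apply le_antisymm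
    · apply Nat.sInf_le
      show ∃ C, IsIDCode (graphA k) C ∧ C.ncard = 2*k-1
      exact ⟨D, hD, hDcard⟩
    · refine le_csInf ⟨2*k-1, ?_⟩ ?_
      · show ∃ C, IsIDCode (graphA k) C ∧ C.ncard = 2*k-1
        exact ⟨D, hD, hDcard⟩
      · rintro n ⟨C, hC, rfl⟩
        exact graphA_lower k hk C hC
end

section
/- For positive integers m and k with m ≤ 3k, γ^{ID}(P_m □ P_{3k}) ≤ mk + k⌈m/3⌉. -/
open SimpleGraph

variable {V W : Type} 

-- auxiliary development (to be inserted before stmt16)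

def codeP (m n a b : ℕ) : Prop :=
  (m = 1 ∧ (b % 2 = 0 ∨ (n % 2 = 0 ∧ b + 3 = n))) ∨
  (¬ m = 1 ∧ (b % 3 = 1 ∨ (b % 3 = 2 ∧ (a % 3 = 1 ∨ (m % 3 = 1 ∧ a + 1 = m)))))

def nbr (i j a b : ℕ) : Prop :=
  (a = i ∧ b = j) ∨ ((a + 1 = i ∨ i + 1 = a) ∧ b = j) ∨ (a = i ∧ (b + 1 = j ∨ j + 1 = b))

lemma mem_cN_grid {m n : ℕ} (u w : Fin m × Fin n) :
    w ∈ cN (pathGraph m □ pathGraph n) u ↔ nbr u.1.val u.2.val w.1.val w.2.val := by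
  obtain ⟨⟨i, hi⟩, ⟨j, hj⟩⟩ := u
  obtain ⟨⟨a, ha⟩, ⟨b, hb⟩⟩ := w
  simp only [cN, Set.mem_insert_iff, SimpleGraph.mem_neighborSet, boxProd_adj,
    pathGraph_adj, nbr, Prod.ext_iff, Fin.mk.injEq]
  omega

lemma cancelMul {k a a' x x' : ℕ} (hx : x < k) (hx' : x' < k)
    (h : a * k + x = a' * k + x') : a = a' ∧ x = x' := by
  have hk : 0 < k := by omega
  have e1 : (a * k + x) / k = a := by
    rw [Nat.add_comm, Nat.add_mul_div_right _ _ hk, Nat.div_eq_of_lt hx, Nat.zero_add]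
  have e2 : (a' * k + x') / k = a' := by
    rw [Nat.add_comm, Nat.add_mul_div_right _ _ hk, Nat.div_eq_of_lt hx', Nat.zero_add]
  have ha : a = a' := by rw [← e1, ← e2, h]
  subst ha
  exact ⟨rfl, Nat.add_left_cancel h⟩

lemma mulBound {a m k x : ℕ} (ha : a < m) (hx : x < k) : a * k + x < m * k := by
  have h1 : a * k + x < a * k + k := Nat.add_lt_add_left hx _
  have h2 : a * k + k ≤ m * k := by
    have h3 : (a + 1) * k ≤ m * k := Nat.mul_le_mul_right k (by omega)
    simpa [Nat.succ_mul] using h3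
  exact lt_of_lt_of_le h1 h2

lemma sepCore (m k i1 j1 i2 j2 : ℕ) (hm : ¬ m = 1) (hm0 : 0 < m) (hk : 0 < k)
    (hi1 : i1 < m) (hj1 : j1 < 3*k) (hi2 : i2 < m) (hj2 : j2 < 3*k)
    (hne : ¬ (i1 = i2 ∧ j1 = j2))
    (H : ∀ a b : ℕ, (a < m ∧ b < 3*k ∧ nbr i1 j1 a b ∧ codeP m (3*k) a b) ↔
                    (a < m ∧ b < 3*k ∧ nbr i2 j2 a b ∧ codeP m (3*k) a b)) : False := by
  have hm2 : 2 ≤ m := by omega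
  have hA1 := (H i1 (3*(j1/3)+1)).1 (by unfold nbr codeP; omega)
  have hcol : j1 / 3 = j2 / 3 := by unfold nbr codeP at hA1; omega
  obtain ⟨q, hq1, hq2, hq3, hq4⟩ : ∃ q, 3*q ≤ j1 ∧ j1 < 3*q+3 ∧ 3*q ≤ j2 ∧ j2 < 3*q+3 :=
    ⟨j1/3, by omega, by omega, by omega, by omega⟩
  have hqk : 3*q+2 < 3*k := by omega
  by_cases e1 : j1 = 3*q+1 <;> by_cases e2 : j2 = 3*q+1
  · have hii : ¬ i1 = i2 := by rintro rfl; exact hne ⟨rfl, by omega⟩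
    rcases (by omega : i1 < i2 ∨ i2 < i1) with hlt | hlt
    · rcases (by omega : i2 + 1 < m ∨ (i2 + 1 = m ∧ 0 < i1) ∨ (i2 + 1 = m ∧ i1 = 0 ∧ 3 ≤ m)
          ∨ (m = 2 ∧ i1 = 0 ∧ i2 = 1)) with h | ⟨h, h'⟩ | ⟨h, h', h''⟩ | ⟨h, h', h''⟩
      · have hh := (H (i2+1) (3*q+1)).2 (by unfold nbr codeP; omega)
        unfold nbr codeP at hh; omega
      · have hh := (H (i1-1) (3*q+1)).1 (by unfold nbr codeP; omega)
        unfold nbr codeP at hh; omega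
      · have hh := (H 0 (3*q+1)).1 (by unfold nbr codeP; omega)
        unfold nbr codeP at hh; omega
      · have hh := (H 1 (3*q+2)).2 (by unfold nbr codeP; omega)
        unfold nbr codeP at hh; omega
    · rcases (by omega : i1 + 1 < m ∨ (i1 + 1 = m ∧ 0 < i2) ∨ (i1 + 1 = m ∧ i2 = 0 ∧ 3 ≤ m)
          ∨ (m = 2 ∧ i2 = 0 ∧ i1 = 1)) with h | ⟨h, h'⟩ | ⟨h, h', h''⟩ | ⟨h, h', h''⟩
      · have hh := (H (i1+1) (3*q+1)).1 (by unfold nbr codeP; omega)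
        unfold nbr codeP at hh; omega
      · have hh := (H (i2-1) (3*q+1)).2 (by unfold nbr codeP; omega)
        unfold nbr codeP at hh; omega
      · have hh := (H 0 (3*q+1)).2 (by unfold nbr codeP; omega)
        unfold nbr codeP at hh; omega
      · have hh := (H 1 (3*q+2)).1 (by unfold nbr codeP; omega)
        unfold nbr codeP at hh; omega
  · obtain ⟨r, hr1, hr2, hr3⟩ : ∃ r, r < m ∧ (r+1 = i1 ∨ r = i1 ∨ r = i1+1) ∧ ¬ r = i2 := by
      rcases (by omega : ¬ i1 = i2 ∨ (i1 = i2 ∧ i1+1 < m) ∨ (i1 = i2 ∧ i1+1 = m)) with h | ⟨h,h'⟩ | ⟨h,h'⟩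
      · exact ⟨i1, by omega, by omega, by omega⟩
      · exact ⟨i1+1, by omega, by omega, by omega⟩
      · exact ⟨i1-1, by omega, by omega, by omega⟩
    have hh := (H r (3*q+1)).1 (by unfold nbr codeP; omega)
    unfold nbr codeP at hh; omega
  · obtain ⟨r, hr1, hr2, hr3⟩ : ∃ r, r < m ∧ (r+1 = i2 ∨ r = i2 ∨ r = i2+1) ∧ ¬ r = i1 := by
      rcases (by omega : ¬ i2 = i1 ∨ (i2 = i1 ∧ i2+1 < m) ∨ (i2 = i1 ∧ i2+1 = m)) with h | ⟨h,h'⟩ | ⟨h,h'⟩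
      · exact ⟨i2, by omega, by omega, by omega⟩
      · exact ⟨i2+1, by omega, by omega, by omega⟩
      · exact ⟨i2-1, by omega, by omega, by omega⟩
    have hh := (H r (3*q+1)).2 (by unfold nbr codeP; omega)
    unfold nbr codeP at hh; omega
  · by_cases e3 : j1 = j2
    · have hii : ¬ i1 = i2 := fun h => hne ⟨h, e3⟩
      have hh := (H i1 (3*q+1)).1 (by unfold nbr codeP; omega)
      unfold nbr codeP at hh; omega
    · have hA := (H i1 (3*q+1)).1 (by unfold nbr codeP; omega)
      have hii : i1 = i2 := by unfold nbr codeP at hA; omega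
      rcases (by omega : (j1 = 3*q ∧ j2 = 3*q+2) ∨ (j2 = 3*q ∧ j1 = 3*q+2)) with ⟨hja, hjb⟩ | ⟨hja, hjb⟩
      · obtain ⟨r, hr1, hr2, hr3⟩ : ∃ r, r < m ∧ (r+1 = i2 ∨ r = i2 ∨ r = i2+1) ∧
            (r % 3 = 1 ∨ (m % 3 = 1 ∧ r + 1 = m)) := by
          rcases (by omega : i2 % 3 = 1 ∨ i2 % 3 = 2 ∨ (i2 % 3 = 0 ∧ i2+1 < m)
              ∨ (i2 % 3 = 0 ∧ i2+1 = m)) with h | h | ⟨h,h'⟩ | ⟨h,h'⟩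
          · exact ⟨i2, by omega, by omega, by omega⟩
          · exact ⟨i2-1, by omega, by omega, by omega⟩
          · exact ⟨i2+1, by omega, by omega, by omega⟩
          · exact ⟨i2, by omega, by omega, by omega⟩
        have hh := (H r (3*q+2)).2 (by unfold nbr codeP; omega)
        unfold nbr codeP at hh; omega
      · obtain ⟨r, hr1, hr2, hr3⟩ : ∃ r, r < m ∧ (r+1 = i1 ∨ r = i1 ∨ r = i1+1) ∧
            (r % 3 = 1 ∨ (m % 3 = 1 ∧ r + 1 = m)) := by
          rcases (by omega : i1 % 3 = 1 ∨ i1 % 3 = 2 ∨ (i1 % 3 = 0 ∧ i1+1 < m)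
              ∨ (i1 % 3 = 0 ∧ i1+1 = m)) with h | h | ⟨h,h'⟩ | ⟨h,h'⟩
          · exact ⟨i1, by omega, by omega, by omega⟩
          · exact ⟨i1-1, by omega, by omega, by omega⟩
          · exact ⟨i1+1, by omega, by omega, by omega⟩
          · exact ⟨i1, by omega, by omega, by omega⟩
        have hh := (H r (3*q+2)).1 (by unfold nbr codeP; omega)
        unfold nbr codeP at hh; omega

lemma sepCore1 (m k i1 j1 i2 j2 : ℕ) (hm : m = 1) (hk : 0 < k)
    (hi1 : i1 < m) (hj1 : j1 < 3*k) (hi2 : i2 < m) (hj2 : j2 < 3*k)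
    (hne : ¬ (i1 = i2 ∧ j1 = j2))
    (H : ∀ a b : ℕ, (a < m ∧ b < 3*k ∧ nbr i1 j1 a b ∧ codeP m (3*k) a b) ↔
                    (a < m ∧ b < 3*k ∧ nbr i2 j2 a b ∧ codeP m (3*k) a b)) : False := by
  have hj : ¬ j1 = j2 := by rintro rfl; exact hne ⟨by omega, rfl⟩
  rcases (by omega : (j1 % 2 = 0 ∧ j2 % 2 = 0) ∨ (j1 % 2 = 0 ∧ j2 % 2 = 1)
      ∨ (j1 % 2 = 1 ∧ j2 % 2 = 0) ∨ (j1 % 2 = 1 ∧ j2 % 2 = 1)) with ⟨p1,p2⟩|⟨p1,p2⟩|⟨p1,p2⟩|⟨p1,p2⟩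
  · have hh := (H 0 j1).1 (by unfold nbr codeP; omega)
    unfold nbr codeP at hh; omega
  · rcases (by omega : (¬ j1 + 1 = j2 ∧ ¬ j2 + 1 = j1) ∨ (j1 + 1 = j2 ∧ j1 + 2 < 3*k)
        ∨ (j1 + 1 = j2 ∧ j1 + 2 = 3*k) ∨ (j2 + 1 = j1 ∧ 0 < j2)
        ∨ (j2 + 1 = j1 ∧ j2 = 0)) with ⟨h,h'⟩|⟨h,h'⟩|⟨h,h'⟩|⟨h,h'⟩|⟨h,h'⟩
    · have hh := (H 0 j1).1 (by unfold nbr codeP; omega)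
      unfold nbr codeP at hh; omega
    · have hh := (H 0 (j1+2)).2 (by unfold nbr codeP; omega)
      unfold nbr codeP at hh; omega
    · have hh := (H 0 (j1-1)).1 (by unfold nbr codeP; omega)
      unfold nbr codeP at hh; omega
    · have hh := (H 0 (j2-1)).2 (by unfold nbr codeP; omega)
      unfold nbr codeP at hh; omega
    · have hh := (H 0 2).1 (by unfold nbr codeP; omega)
      unfold nbr codeP at hh; omega
  · rcases (by omega : (¬ j2 + 1 = j1 ∧ ¬ j1 + 1 = j2) ∨ (j2 + 1 = j1 ∧ j2 + 2 < 3*k)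
        ∨ (j2 + 1 = j1 ∧ j2 + 2 = 3*k) ∨ (j1 + 1 = j2 ∧ 0 < j1)
        ∨ (j1 + 1 = j2 ∧ j1 = 0)) with ⟨h,h'⟩|⟨h,h'⟩|⟨h,h'⟩|⟨h,h'⟩|⟨h,h'⟩
    · have hh := (H 0 j2).2 (by unfold nbr codeP; omega)
      unfold nbr codeP at hh; omega
    · have hh := (H 0 (j2+2)).1 (by unfold nbr codeP; omega)
      unfold nbr codeP at hh; omega
    · have hh := (H 0 (j2-1)).2 (by unfold nbr codeP; omega)
      unfold nbr codeP at hh; omega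
    · have hh := (H 0 (j1-1)).1 (by unfold nbr codeP; omega)
      unfold nbr codeP at hh; omega
    · have hh := (H 0 2).2 (by unfold nbr codeP; omega)
      unfold nbr codeP at hh; omega
  · rcases (by omega : (¬ j2 + 2 = j1 ∧ ¬ j1 + 2 = j2) ∨ (j2 + 2 = j1 ∧ j1 + 1 < 3*k)
        ∨ (j2 + 2 = j1 ∧ j1 + 1 = 3*k) ∨ (j1 + 2 = j2 ∧ j2 + 1 < 3*k)
        ∨ (j1 + 2 = j2 ∧ j2 + 1 = 3*k)) with ⟨h,h'⟩|⟨h,h'⟩|⟨h,h'⟩|⟨h,h'⟩|⟨h,h'⟩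
    · have hh := (H 0 (j1-1)).1 (by unfold nbr codeP; omega)
      unfold nbr codeP at hh; omega
    · have hh := (H 0 (j1+1)).1 (by unfold nbr codeP; omega)
      unfold nbr codeP at hh; omega
    · have hh := (H 0 (3*k-3)).2 (by unfold nbr codeP; omega)
      unfold nbr codeP at hh; omega
    · have hh := (H 0 (j2+1)).2 (by unfold nbr codeP; omega)
      unfold nbr codeP at hh; omega
    · have hh := (H 0 (3*k-3)).1 (by unfold nbr codeP; omega)
      unfold nbr codeP at hh; omega

/-- for positive m, k with m ≤ 3k,
γ^ID(P_m □ P_{3k}) ≤ mk + k⌈m/3⌉. -/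
theorem stmt16 (m k : ℕ) (hm : 0 < m) (hk : 0 < k) (hmk : m ≤ 3 * k) :
    idNum (pathGraph m □ pathGraph (3 * k)) ≤ m * k + k * ((m + 2) / 3) := by
  classical
  set C : Set (Fin m × Fin (3*k)) := {p | codeP m (3*k) p.1.val p.2.val} with hCdef
  -- domination
  have hdom : IsDomSet (pathGraph m □ pathGraph (3*k)) C := by
    rintro ⟨⟨i, hi⟩, ⟨j, hj⟩⟩
    have wit : ∀ a b (ha : a < m) (hb : b < 3*k), nbr i j a b → codeP m (3*k) a b →
        (cN (pathGraph m □ pathGraph (3*k)) (⟨i, hi⟩, ⟨j, hj⟩) ∩ C).Nonempty :=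
      fun a b ha hb h1 h2 => ⟨(⟨a, ha⟩, ⟨b, hb⟩), (mem_cN_grid _ _).2 h1, h2⟩
    rcases (by omega : (m = 1 ∧ j % 2 = 0) ∨ (m = 1 ∧ j % 2 = 1) ∨ (¬ m = 1 ∧ j % 3 = 1)
        ∨ (¬ m = 1 ∧ j % 3 = 0) ∨ (¬ m = 1 ∧ j % 3 = 2)) with
      ⟨h, h'⟩ | ⟨h, h'⟩ | ⟨h, h'⟩ | ⟨h, h'⟩ | ⟨h, h'⟩
    · exact wit i j hi hj (by unfold nbr; omega) (by unfold codeP; omega)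
    · exact wit i (j-1) hi (by omega) (by unfold nbr; omega) (by unfold codeP; omega)
    · exact wit i j hi hj (by unfold nbr; omega) (by unfold codeP; omega)
    · exact wit i (j+1) hi (by omega) (by unfold nbr; omega) (by unfold codeP; omega)
    · exact wit i (j-1) hi (by omega) (by unfold nbr; omega) (by unfold codeP; omega)
  -- separation
  have hsep : ∀ u v : Fin m × Fin (3*k), u ≠ v →
      cN (pathGraph m □ pathGraph (3*k)) u ∩ C ≠ cN (pathGraph m □ pathGraph (3*k)) v ∩ C := by
    rintro ⟨⟨i1, hi1⟩, ⟨j1, hj1⟩⟩ ⟨⟨i2, hi2⟩, ⟨j2, hj2⟩⟩ hne heq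
    have hne' : ¬ (i1 = i2 ∧ j1 = j2) := by
      rintro ⟨h1, h2⟩; subst h1; subst h2; exact hne rfl
    have H : ∀ a b : ℕ, (a < m ∧ b < 3*k ∧ nbr i1 j1 a b ∧ codeP m (3*k) a b) ↔
        (a < m ∧ b < 3*k ∧ nbr i2 j2 a b ∧ codeP m (3*k) a b) := by
      intro a b
      constructor
      · rintro ⟨ha, hb, h1, h2⟩
        have hx : ((⟨a, ha⟩, ⟨b, hb⟩) : Fin m × Fin (3*k)) ∈
            cN (pathGraph m □ pathGraph (3*k)) (⟨i1, hi1⟩, ⟨j1, hj1⟩) ∩ C :=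
          ⟨(mem_cN_grid _ _).2 h1, h2⟩
        rw [heq] at hx
        exact ⟨ha, hb, (mem_cN_grid _ _).1 hx.1, hx.2⟩
      · rintro ⟨ha, hb, h1, h2⟩
        have hx : ((⟨a, ha⟩, ⟨b, hb⟩) : Fin m × Fin (3*k)) ∈
            cN (pathGraph m □ pathGraph (3*k)) (⟨i2, hi2⟩, ⟨j2, hj2⟩) ∩ C :=
          ⟨(mem_cN_grid _ _).2 h1, h2⟩
        rw [← heq] at hx
        exact ⟨ha, hb, (mem_cN_grid _ _).1 hx.1, hx.2⟩
    by_cases h1 : m = 1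
    · exact sepCore1 m k i1 j1 i2 j2 h1 hk hi1 hj1 hi2 hj2 hne' H
    · exact sepCore m k i1 j1 i2 j2 h1 hm hk hi1 hj1 hi2 hj2 hne' H
  -- cardinality bound
  have hub : C.ncard ≤ m * k + k * ((m + 2) / 3) := by
    set f : Fin m × Fin (3*k) → ℕ := fun p =>
      if m = 1 then (if p.2.val % 2 = 0 then p.2.val / 2 else 2*k - 1)
      else if p.2.val % 3 = 1 then p.1.val * k + p.2.val / 3
      else m*k + (p.1.val/3)*k + p.2.val/3 with hfdef
    have hf : ∀ p ∈ C, f p ∈ ((Finset.range (m * k + k * ((m + 2) / 3)) : Finset ℕ) : Set ℕ) := by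
      rintro ⟨⟨a, ha⟩, ⟨b, hb⟩⟩ hp
      have hp' : codeP m (3*k) a b := hp
      unfold codeP at hp'
      simp only [hfdef, Finset.coe_range, Set.mem_Iio]
      by_cases h1 : m = 1
      · subst h1
        rw [if_pos rfl]
        by_cases h2 : b % 2 = 0
        · rw [if_pos h2]; omega
        · rw [if_neg h2]; omega
      · rw [if_neg h1]
        by_cases h2 : b % 3 = 1
        · rw [if_pos h2]
          exact lt_of_lt_of_le (mulBound ha (by omega : b/3 < k)) (Nat.le_add_right _ _)
        · rw [if_neg h2]
          have h3 : a/3 < (m+2)/3 := by omega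
          have h4 : (a/3)*k + b/3 < ((m+2)/3)*k := mulBound h3 (by omega)
          rw [Nat.add_assoc, Nat.mul_comm k ((m+2)/3)]
          exact Nat.add_lt_add_left h4 _
    have hinj : Set.InjOn f C := by
      rintro ⟨⟨a, ha⟩, ⟨b, hb⟩⟩ hp ⟨⟨a', ha'⟩, ⟨b', hb'⟩⟩ hq hfe
      have hp' : codeP m (3*k) a b := hp
      have hq' : codeP m (3*k) a' b' := hq
      unfold codeP at hp' hq'
      simp only [hfdef] at hfe
      simp only [Prod.mk.injEq, Fin.mk.injEq]
      by_cases h1 : m = 1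
      · subst h1
        rw [if_pos rfl, if_pos rfl] at hfe
        by_cases h2 : b % 2 = 0 <;> by_cases h3 : b' % 2 = 0
        · rw [if_pos h2, if_pos h3] at hfe; omega
        · rw [if_pos h2, if_neg h3] at hfe; omega
        · rw [if_neg h2, if_pos h3] at hfe; omega
        · rw [if_neg h2, if_neg h3] at hfe; omega
      · rw [if_neg h1, if_neg h1] at hfe
        have hmk' : m * k ≤ m*k + (a'/3)*k + b'/3 :=
          le_trans (Nat.le_add_right (m*k) ((a'/3)*k)) (Nat.le_add_right _ _)
        have hmk'' : m * k ≤ m*k + (a/3)*k + b/3 :=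
          le_trans (Nat.le_add_right (m*k) ((a/3)*k)) (Nat.le_add_right _ _)
        by_cases h2 : b % 3 = 1 <;> by_cases h3 : b' % 3 = 1
        · rw [if_pos h2, if_pos h3] at hfe
          obtain ⟨e1, e2⟩ := cancelMul (by omega : b/3 < k) (by omega : b'/3 < k) hfe
          exact ⟨e1, by omega⟩
        · rw [if_pos h2, if_neg h3] at hfe
          have hlt : a*k + b/3 < m*k := mulBound ha (by omega)
          rw [hfe] at hlt
          exact absurd hlt (Nat.not_lt.2 (by rw [Nat.add_assoc] at hmk' ⊢; exact hmk'))
        · rw [if_neg h2, if_pos h3] at hfe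
          have hlt : a'*k + b'/3 < m*k := mulBound ha' (by omega)
          rw [← hfe] at hlt
          exact absurd hlt (Nat.not_lt.2 hmk'')
        · rw [if_neg h2, if_neg h3] at hfe
          rw [Nat.add_assoc, Nat.add_assoc] at hfe
          have hfe' := Nat.add_left_cancel hfe
          obtain ⟨e1, e2⟩ := cancelMul (by omega : b/3 < k) (by omega : b'/3 < k) hfe'
          exact ⟨by omega, by omega⟩
    have h := Set.ncard_le_ncard_of_injOn f hf hinj
      (Finset.finite_toSet (Finset.range (m * k + k * ((m + 2) / 3))))
    rwa [Set.ncard_coe_finset, Finset.card_range] at h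
  calc idNum (pathGraph m □ pathGraph (3 * k)) ≤ C.ncard :=
        Nat.sInf_le ⟨C, ⟨hdom, hsep⟩, rfl⟩
    _ ≤ m * k + k * ((m + 2) / 3) := hub
end

section
/- For all positive integers m, n with 2 ≤ m ≤ n, every identifying code of the grid graph P_m □ P_n has cardinality at least mn/3; that is, γ^{ID}(P_m □ P_n) ≥ mn/3. -/
open SimpleGraph

variable {V W : Type} 

open Finset

lemma mem_cN_comm (G : SimpleGraph V) (u v : V) : u ∈ cN G v ↔ v ∈ cN G u := by
  simp only [cN, Set.mem_insert_iff, mem_neighborSet]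
  constructor
  · rintro (h | h)
    · exact Or.inl h.symm
    · exact Or.inr h.symm
  · rintro (h | h)
    · exact Or.inl h.symm
    · exact Or.inr h.symm

lemma counting [Fintype V] (G : SimpleGraph V) (C : Set V) (hC : IsIDCode G C)
    (hdeg : ∀ v : V, (cN G v).ncard ≤ 5) :
    2 * Fintype.card V ≤ 6 * C.ncard := by
  classical
  set Cf : Finset V := C.toFinset with hCf
  set idF : V → Finset V := fun v => (cN G v ∩ C).toFinset with hidF
  have hne : ∀ v, (idF v).Nonempty := fun v => Set.toFinset_nonempty.2 (hC.1 v)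
  have hinj : Function.Injective idF := by
    intro u v h
    by_contra hneq
    exact hC.2 u v hneq (Set.toFinset_inj.mp h)
  have hsub : ∀ v, idF v ⊆ Cf := by
    intro v x hx
    simp only [hidF, Set.mem_toFinset, Set.mem_inter_iff] at hx
    simp [hCf, hx.2]
  set T : ℕ := ∑ v : V, (idF v).card with hT
  -- upper bound on T
  have hTle : T ≤ 5 * Cf.card := by
    have h1 : T = ∑ c : V, (univ.filter (fun v => c ∈ idF v)).card := by
      rw [hT]
      simp only [Finset.card_filter]
      rw [Finset.sum_comm]
      congr 1
      ext v
      simp [Finset.sum_ite_mem]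
    have h2 : ∀ c : V, (univ.filter (fun v => c ∈ idF v)).card ≤ if c ∈ Cf then 5 else 0 := by
      intro c
      by_cases hc : c ∈ Cf
      · simp only [hc, if_true]
        have hsub2 : (univ.filter (fun v => c ∈ idF v)) ⊆ (cN G c).toFinset := by
          intro v hv
          simp only [Finset.mem_filter, hidF, Set.mem_toFinset, Set.mem_inter_iff] at hv
          rw [Set.mem_toFinset]
          exact (mem_cN_comm G c v).mp hv.2.1
        calc (univ.filter (fun v => c ∈ idF v)).card ≤ (cN G c).toFinset.card :=
              Finset.card_le_card hsub2
          _ = (cN G c).ncard := (Set.ncard_eq_toFinset_card' _).symm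
          _ ≤ 5 := hdeg c
      · simp only [hc, if_false]
        rw [Nat.le_zero, Finset.card_eq_zero, Finset.filter_eq_empty_iff]
        intro v _ hcv
        exact hc (hsub v hcv)
    calc T = ∑ c : V, (univ.filter (fun v => c ∈ idF v)).card := h1
      _ ≤ ∑ c : V, if c ∈ Cf then 5 else 0 := Finset.sum_le_sum (fun c _ => h2 c)
      _ = 5 * Cf.card := by
            rw [Finset.sum_ite_mem, Finset.univ_inter, Finset.sum_const, smul_eq_mul,
              Nat.mul_comm]
  -- lower bound on T
  set S : Finset V := univ.filter (fun v => (idF v).card = 1) with hS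
  have hScard : S.card ≤ Cf.card := by
    have h1 : S.card = (S.image idF).card :=
      (Finset.card_image_of_injective S hinj).symm
    have h2 : S.image idF ⊆ Cf.image (fun c => ({c} : Finset V)) := by
      intro s hs
      simp only [Finset.mem_image] at hs ⊢
      obtain ⟨v, hv, rfl⟩ := hs
      simp only [hS, Finset.mem_filter] at hv
      obtain ⟨a, ha⟩ := Finset.card_eq_one.mp hv.2
      refine ⟨a, ?_, ha.symm⟩
      exact hsub v (ha ▸ Finset.mem_singleton_self a)
    calc S.card = (S.image idF).card := h1
      _ ≤ (Cf.image (fun c => ({c} : Finset V))).card := Finset.card_le_card h2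
      _ ≤ Cf.card := Finset.card_image_le
  have hTge : 2 * Fintype.card V ≤ T + S.card := by
    have : ∀ v : V, 2 ≤ (idF v).card + (if v ∈ S then 1 else 0) := by
      intro v
      by_cases hv : v ∈ S
      · simp only [hv, if_true]
        have := Finset.card_pos.mpr (hne v)
        omega
      · simp only [hv, if_false]
        simp only [hS, Finset.mem_filter, Finset.mem_univ, true_and] at hv
        have := Finset.card_pos.mpr (hne v)
        omega
    calc 2 * Fintype.card V = ∑ _v : V, 2 := by
          rw [Finset.sum_const, Finset.card_univ]; ring
      _ ≤ ∑ v : V, ((idF v).card + (if v ∈ S then 1 else 0)) :=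
          Finset.sum_le_sum (fun v _ => this v)
      _ = T + S.card := by
          rw [Finset.sum_add_distrib, Finset.sum_ite_mem, Finset.univ_inter,
            Finset.sum_const, hT]
          simp
  have hCn : C.ncard = Cf.card := Set.ncard_eq_toFinset_card' C
  omega

lemma path_nbr {k : ℕ} (u : Fin k) : ((pathGraph k).neighborSet u).ncard ≤ 2 := by
  have hsub : (pathGraph k).neighborSet u ⊆
      {v : Fin k | (v : ℕ) = (u : ℕ) + 1} ∪ {v : Fin k | (v : ℕ) + 1 = (u : ℕ)} := by
    intro v hv
    rw [mem_neighborSet, pathGraph_adj] at hv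
    rcases hv with h | h
    · exact Or.inl h.symm
    · exact Or.inr h
  calc ((pathGraph k).neighborSet u).ncard
      ≤ ({v : Fin k | (v : ℕ) = (u : ℕ) + 1} ∪ {v : Fin k | (v : ℕ) + 1 = (u : ℕ)}).ncard :=
        Set.ncard_le_ncard hsub (Set.toFinite _)
    _ ≤ ({v : Fin k | (v : ℕ) = (u : ℕ) + 1}).ncard
        + ({v : Fin k | (v : ℕ) + 1 = (u : ℕ)}).ncard := Set.ncard_union_le _ _
    _ ≤ 1 + 1 := by
        gcongr
        · rw [Set.ncard_le_one (Set.toFinite _)]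
          intro a ha b hb
          exact Fin.ext (ha.trans hb.symm)
        · rw [Set.ncard_le_one (Set.toFinite _)]
          intro a ha b hb
          exact Fin.ext (Nat.succ_injective (ha.trans hb.symm))

lemma grid_deg {m n : ℕ} (v : Fin m × Fin n) :
    (cN (pathGraph m □ pathGraph n) v).ncard ≤ 5 := by
  obtain ⟨a, b⟩ := v
  have hN : (pathGraph m □ pathGraph n).neighborSet (a, b) =
      ((fun x => (x, b)) '' (pathGraph m).neighborSet a) ∪
      ((fun y => (a, y)) '' (pathGraph n).neighborSet b) := by
    ext ⟨x, y⟩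
    simp only [mem_neighborSet, boxProd_adj, Set.mem_union, Set.mem_image]
    constructor
    · rintro (⟨h, rfl⟩ | ⟨h, rfl⟩)
      · exact Or.inl ⟨x, h, rfl⟩
      · exact Or.inr ⟨y, h, rfl⟩
    · rintro (⟨x', h, heq⟩ | ⟨y', h, heq⟩)
      · obtain ⟨rfl, rfl⟩ := Prod.mk.injEq .. ▸ heq
        exact Or.inl ⟨h, rfl⟩
      · obtain ⟨rfl, rfl⟩ := Prod.mk.injEq .. ▸ heq
        exact Or.inr ⟨h, rfl⟩
  calc (cN (pathGraph m □ pathGraph n) (a, b)).ncard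
      ≤ ((pathGraph m □ pathGraph n).neighborSet (a,b)).ncard + 1 := Set.ncard_insert_le _ _
    _ ≤ (((fun x => (x, b)) '' (pathGraph m).neighborSet a).ncard
        + ((fun y => (a, y)) '' (pathGraph n).neighborSet b).ncard) + 1 := by
        rw [hN]; exact Nat.add_le_add_right (Set.ncard_union_le _ _) 1
    _ ≤ (2 + 2) + 1 := by
        gcongr
        · rw [Set.ncard_image_of_injective _ (fun x y h => (Prod.mk.injEq .. ▸ h).1)]
          exact path_nbr a
        · rw [Set.ncard_image_of_injective _ (fun x y h => (Prod.mk.injEq .. ▸ h).2)]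
          exact path_nbr b
    _ ≤ 5 := by norm_num

lemma path_exists_nbr {k : ℕ} (hk : 2 ≤ k) (b : Fin k) :
    ∃ b', (pathGraph k).Adj b b' := by
  by_cases h : (b : ℕ) + 1 < k
  · exact ⟨⟨(b : ℕ) + 1, h⟩, pathGraph_adj.mpr (Or.inl rfl)⟩
  · have hb : (b : ℕ) = k - 1 := by omega
    refine ⟨⟨(b : ℕ) - 1, by omega⟩, pathGraph_adj.mpr (Or.inr ?_)⟩
    simp only
    omega

lemma grid_twinfree {m n : ℕ} (hm : 2 ≤ m) (hn : 2 ≤ n) (u v : Fin m × Fin n)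
    (h : cN (pathGraph m □ pathGraph n) u = cN (pathGraph m □ pathGraph n) v) : u = v := by
  by_contra hne
  have hu : u ∈ cN (pathGraph m □ pathGraph n) v := h ▸ Set.mem_insert u _
  rcases Set.mem_insert_iff.mp hu with heq | hadj
  · exact hne heq
  rw [mem_neighborSet] at hadj
  obtain ⟨a, b⟩ := u
  obtain ⟨c, d⟩ := v
  rcases boxProd_adj.mp hadj with ⟨hac, hbd⟩ | ⟨hbd, hac⟩
  · -- Adj c a, d = b : horizontal edge; use a neighbor of b in second coord
    simp only at hac hbd
    subst hbd
    obtain ⟨b', hb'⟩ := path_exists_nbr hn d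
    have h1 : ((a, b') : Fin m × Fin n) ∈ cN (pathGraph m □ pathGraph n) (a, d) := by
      exact Set.mem_insert_of_mem _ (boxProd_adj.mpr (Or.inr ⟨hb', rfl⟩))
    rw [h] at h1
    rcases Set.mem_insert_iff.mp h1 with heq | hadj2
    · exact hac.ne (Prod.mk.injEq .. ▸ heq).1.symm
    · rw [mem_neighborSet] at hadj2
      rcases boxProd_adj.mp hadj2 with ⟨_, h2⟩ | ⟨_, h2⟩
      · exact hb'.ne (by simpa using h2)
      · exact hac.ne (by simpa using h2)
  · -- vertical edge
    simp only at hac hbd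
    subst hac
    obtain ⟨a', ha'⟩ := path_exists_nbr hm c
    have h1 : ((a', b) : Fin m × Fin n) ∈ cN (pathGraph m □ pathGraph n) (c, b) := by
      exact Set.mem_insert_of_mem _ (boxProd_adj.mpr (Or.inl ⟨ha', rfl⟩))
    rw [h] at h1
    rcases Set.mem_insert_iff.mp h1 with heq | hadj2
    · exact hbd.ne (Prod.mk.injEq .. ▸ heq).2.symm
    · rw [mem_neighborSet] at hadj2
      rcases boxProd_adj.mp hadj2 with ⟨_, h2⟩ | ⟨_, h2⟩
      · exact hbd.ne (by simpa using h2)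
      · exact ha'.ne (by simpa using h2)

lemma grid_univ_ID {m n : ℕ} (hm : 2 ≤ m) (hn : 2 ≤ n) :
    IsIDCode (pathGraph m □ pathGraph n) Set.univ := by
  constructor
  · intro v
    exact ⟨v, Set.mem_insert _ _, Set.mem_univ _⟩
  · intro u v hne h
    simp only [Set.inter_univ] at h
    exact hne (grid_twinfree hm hn u v h)


/-- for 2 ≤ m ≤ n, every ID code of P_m □ P_n has cardinality at least
mn/3; that is, γ^ID(P_m □ P_n) ≥ mn/3. -/
theorem stmt18 (m n : ℕ) (h2 : 2 ≤ m) (hmn : m ≤ n) :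
    (∀ C : Set (Fin m × Fin n), IsIDCode (pathGraph m □ pathGraph n) C →
        (m * n : ℚ) / 3 ≤ C.ncard) ∧
      (m * n : ℚ) / 3 ≤ idNum (pathGraph m □ pathGraph n) := by 
  have hn : 2 ≤ n := le_trans h2 hmn
  have key : ∀ C : Set (Fin m × Fin n), IsIDCode (pathGraph m □ pathGraph n) C →
      (m * n : ℚ) / 3 ≤ C.ncard := by
    intro C hC
    have hcnt := counting (pathGraph m □ pathGraph n) C hC (fun v => grid_deg v)
    have hcard : Fintype.card (Fin m × Fin n) = m * n := by simp
    rw [hcard] at hcnt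
    rw [div_le_iff₀ (by norm_num : (0:ℚ) < 3)]
    have h3 : (m * n : ℕ) ≤ 3 * C.ncard := by omega
    calc ((m : ℚ) * n) = ((m * n : ℕ) : ℚ) := by push_cast; ring
      _ ≤ ((3 * C.ncard : ℕ) : ℚ) := by exact_mod_cast h3
      _ = (C.ncard : ℚ) * 3 := by push_cast; ring
  refine ⟨key, ?_⟩
  have hnonempty : {k | ∃ C : Set (Fin m × Fin n),
      IsIDCode (pathGraph m □ pathGraph n) C ∧ C.ncard = k}.Nonempty :=
    ⟨(Set.univ : Set (Fin m × Fin n)).ncard, Set.univ, grid_univ_ID h2 hn, rfl⟩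
  obtain ⟨C, hC, hCc⟩ := Nat.sInf_mem hnonempty
  rw [idNum, ← hCc]
  exact key C hC
end
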